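/- arXiv:2009.11788 — 4 statements merged into one kernel-verified Lean document; each statement's English description precedes it below -/
import Mathlib

section
/- Let Γ be an antipodal distance-regular graph of diameter 3 with intersection array {k, (r−1)μ, 1; 1, μ, k} where r > 2 and k = rμ + 1. Then Γ₂ is a Deza graph with parameters (r(k+1), (r−1)k, b, a) where {a, b} = {(r−1)²μ, k(r−2)}: any two distinct vertices of Γ₂ have exactly (r−1)²μ or k(r−2) common neighbors in Γ₂. -/
open SimpleGraph

variable {V : Type*}

/-- `cArr k μ i` is the intersection number `c_i` of the array `{k,(r-1)μ,1;1,μ,k}`. -/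
def cArr (k μ : ℕ) : ℕ → ℕ
  | 1 => 1
  | 2 => μ
  | 3 => k
  | _ => 0

/-- `bArr k r μ i` is the intersection number `b_i` of the array `{k,(r-1)μ,1;1,μ,k}`. -/
def bArr (k r μ : ℕ) : ℕ → ℕ
  | 0 => k
  | 1 => (r - 1) * μ
  | 2 => 1
  | _ => 0

/-- `Γ` is a distance-regular graph of diameter 3 with intersection array
`{k, (r-1)μ, 1; 1, μ, k}`. -/
def IsDRG3 [Fintype V] (Γ : SimpleGraph V) (k r μ : ℕ) : Prop :=
  Γ.Connected ∧ (∀ x y : V, Γ.dist x y ≤ 3) ∧ (∃ x y : V, Γ.dist x y = 3) ∧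
  ∀ (i : ℕ) (x y : V), i ≤ 3 → Γ.dist x y = i →
    {z : V | Γ.dist x z = i - 1 ∧ Γ.Adj z y}.ncard = cArr k μ i ∧
    {z : V | Γ.dist x z = i + 1 ∧ Γ.Adj z y}.ncard = bArr k r μ i

/-- The relation "equal or at distance 3" is transitive (hence an equivalence). -/
def IsAntipodal [Fintype V] (Γ : SimpleGraph V) : Prop :=
  ∀ x y z : V, (x = y ∨ Γ.dist x y = 3) → (y = z ∨ Γ.dist y z = 3) →
    (x = z ∨ Γ.dist x z = 3)

/-- The distance-`i` graph of `Γ`: vertices adjacent iff at distance exactly `i`. -/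
def distGraph [Fintype V] (Γ : SimpleGraph V) (i : ℕ) : SimpleGraph V :=
  SimpleGraph.fromRel (fun x y => Γ.dist x y = i)

section Aux

open Finset
open scoped Classical

variable [Fintype V]

/-- The sphere of radius `i` about `x`, as a `Finset`. -/
private noncomputable def Sf (Γ : SimpleGraph V) (x : V) (i : ℕ) : Finset V :=
  univ.filter (fun z => Γ.dist x z = i)

/-- The antipodal fiber of `x`, as a `Finset`. -/
private noncomputable def Ff (Γ : SimpleGraph V) (x : V) : Finset V :=
  univ.filter (fun z => z = x ∨ Γ.dist x z = 3)

variable {Γ : SimpleGraph V} {k r μ : ℕ}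

private lemma mem_Sf {x z : V} {i : ℕ} : z ∈ Sf Γ x i ↔ Γ.dist x z = i := by
  simp [Sf]

private lemma mem_Ff {x z : V} : z ∈ Ff Γ x ↔ z = x ∨ Γ.dist x z = 3 := by
  simp [Ff]

private lemma ncard_filter (p : V → Prop) [DecidablePred p] :
    {z : V | p z}.ncard = (univ.filter p).card := by
  rw [Set.ncard_eq_toFinset_card']
  congr 1
  ext z
  simp

private lemma cset (hD : IsDRG3 Γ k r μ) {i : ℕ} {x y : V} (hi : i ≤ 3)
    (hxy : Γ.dist x y = i) :
    (univ.filter fun z => Γ.dist x z = i - 1 ∧ Γ.Adj z y).card = cArr k μ i := by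
  rw [← ncard_filter]; exact (hD.2.2.2 i x y hi hxy).1

private lemma bset (hD : IsDRG3 Γ k r μ) {i : ℕ} {x y : V} (hi : i ≤ 3)
    (hxy : Γ.dist x y = i) :
    (univ.filter fun z => Γ.dist x z = i + 1 ∧ Γ.Adj z y).card = bArr k r μ i := by
  rw [← ncard_filter]; exact (hD.2.2.2 i x y hi hxy).2

private lemma card_S1 (hD : IsDRG3 Γ k r μ) (x : V) : (Sf Γ x 1).card = k := by
  have h := bset hD (i := 0) (x := x) (y := x) (by norm_num) (by simp)
  rw [show bArr k r μ 0 = k from rfl] at h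
  rw [← h]
  congr 1
  ext z
  simp only [Sf, mem_filter, mem_univ, true_and]
  constructor
  · intro hz; exact ⟨by simpa using hz, by rw [← dist_eq_one_iff_adj, SimpleGraph.dist_comm]; simpa using hz⟩
  · intro hz; simpa using hz.1

private lemma dc (hD : IsDRG3 Γ k r μ) (x : V) {i : ℕ} (hi : i + 1 ≤ 3) :
    (Sf Γ x i).card * bArr k r μ i = (Sf Γ x (i + 1)).card * cArr k μ (i + 1) := by
  set E : Finset (V × V) :=
    univ.filter (fun p => Γ.dist x p.1 = i ∧ Γ.dist x p.2 = i + 1 ∧ Γ.Adj p.1 p.2) with hE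
  have h1 : E.card = ∑ y ∈ Sf Γ x i, (E.filter fun p => p.1 = y).card :=
    card_eq_sum_card_fiberwise (fun p hp => by
      simp only [hE, mem_filter, mem_univ, true_and] at hp
      exact mem_Sf.2 (Finset.mem_filter.1 hp).2.1)
  have h2 : E.card = ∑ z ∈ Sf Γ x (i + 1), (E.filter fun p => p.2 = z).card :=
    card_eq_sum_card_fiberwise (fun p hp => by
      simp only [hE, mem_filter, mem_univ, true_and] at hp
      exact mem_Sf.2 (Finset.mem_filter.1 hp).2.2.1)
  have hb : ∀ y ∈ Sf Γ x i, (E.filter fun p => p.1 = y).card = bArr k r μ i := by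
    intro y hy
    have hy' := mem_Sf.1 hy
    have himg : E.filter (fun p => p.1 = y) =
        (univ.filter fun z => Γ.dist x z = i + 1 ∧ Γ.Adj z y).image (fun z => (y, z)) := by
      ext p
      simp only [hE, mem_filter, mem_univ, true_and, mem_image]
      constructor
      · rintro ⟨⟨ha, hb', hc⟩, hd⟩
        refine ⟨p.2, ⟨hb', ?_⟩, ?_⟩
        · rw [← hd]; exact hc.symm
        · rw [← hd]
      · rintro ⟨z, ⟨hz1, hz2⟩, rfl⟩
        exact ⟨⟨hy', hz1, hz2.symm⟩, rfl⟩
    rw [himg, card_image_of_injective _ (fun a b h => by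
      simpa using (Prod.mk.injEq y a y b ▸ h : (y, a) = (y, b)))]
    exact bset hD (by omega) hy'
  have hc : ∀ z ∈ Sf Γ x (i + 1), (E.filter fun p => p.2 = z).card = cArr k μ (i + 1) := by
    intro z hz
    have hz' := mem_Sf.1 hz
    have himg : E.filter (fun p => p.2 = z) =
        (univ.filter fun w => Γ.dist x w = i ∧ Γ.Adj w z).image (fun w => (w, z)) := by
      ext p
      simp only [hE, mem_filter, mem_univ, true_and, mem_image]
      constructor
      · rintro ⟨⟨ha, hb', hc⟩, hd⟩
        refine ⟨p.1, ⟨ha, ?_⟩, ?_⟩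
        · rw [← hd]; exact hc
        · rw [← hd]
      · rintro ⟨w, ⟨hw1, hw2⟩, rfl⟩
        exact ⟨⟨hw1, hz', hw2⟩, rfl⟩
    rw [himg, card_image_of_injective _ (fun a b h => by
      simpa using (h : (a, z) = (b, z)))]
    have := cset hD (i := i + 1) (x := x) (y := z) (by omega) hz'
    rwa [show i + 1 - 1 = i by omega] at this
  calc (Sf Γ x i).card * bArr k r μ i
      = ∑ y ∈ Sf Γ x i, bArr k r μ i := by rw [sum_const, smul_eq_mul]
    _ = E.card := by rw [h1]; exact (sum_congr rfl hb).symm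
    _ = ∑ z ∈ Sf Γ x (i + 1), cArr k μ (i + 1) := by rw [h2]; exact sum_congr rfl hc
    _ = (Sf Γ x (i + 1)).card * cArr k μ (i + 1) := by rw [sum_const, smul_eq_mul]

private lemma card_S2 (hD : IsDRG3 Γ k r μ) (hμ : 0 < μ) (x : V) :
    (Sf Γ x 2).card = (r - 1) * k := by
  have h := dc hD x (i := 1) (by norm_num)
  rw [card_S1 hD x, show bArr k r μ 1 = (r - 1) * μ from rfl,
    show cArr k μ 2 = μ from rfl] at h
  have h2 : ((r - 1) * k) * μ = (Sf Γ x 2).card * μ := by rw [← h]; ring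
  exact (Nat.eq_of_mul_eq_mul_right hμ h2).symm

private lemma card_S3 (hD : IsDRG3 Γ k r μ) (hμ : 0 < μ) (hk : k = r * μ + 1) (x : V) :
    (Sf Γ x 3).card = r - 1 := by
  have h := dc hD x (i := 2) (by norm_num)
  rw [card_S2 hD hμ x, show bArr k r μ 2 = 1 from rfl, show cArr k μ 3 = k from rfl] at h
  have hkpos : 0 < k := by omega
  have h2 : (r - 1) * k = (Sf Γ x 3).card * k := by rw [← h]; ring
  exact (Nat.eq_of_mul_eq_mul_right hkpos h2).symm

private lemma card_S0 (hc : Γ.Connected) (x : V) : (Sf Γ x 0).card = 1 := by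
  have h : Sf Γ x 0 = {x} := by
    ext z
    simp [Sf, hc.dist_eq_zero_iff, eq_comm]
  simp [h]

private lemma card_Ff (hD : IsDRG3 Γ k r μ) (hr : 2 < r) (hμ : 0 < μ)
    (hk : k = r * μ + 1) (x : V) : (Ff Γ x).card = r := by
  have h : Ff Γ x = insert x (Sf Γ x 3) := by
    ext z
    simp only [mem_Ff, Finset.mem_insert, mem_Sf]
  have hx : x ∉ Sf Γ x 3 := by simp [mem_Sf, SimpleGraph.dist_self]
  rw [h, card_insert_of_notMem hx, card_S3 hD hμ hk x]
  omega

private lemma card_V' (hD : IsDRG3 Γ k r μ) (hr : 2 < r) (hμ : 0 < μ)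
    (hk : k = r * μ + 1) (x : V) : (univ : Finset V).card = r * (k + 1) := by
  have hpart : (univ : Finset V).card
      = ∑ i ∈ range 4, (univ.filter fun z => Γ.dist x z = i).card :=
    card_eq_sum_card_fiberwise (fun z _ => mem_range.2 (by
      have := hD.2.1 x z; omega))
  have hS : ∀ i, (univ.filter fun z => Γ.dist x z = i) = Sf Γ x i := fun i => rfl
  rw [hpart]
  simp only [hS]
  rw [Finset.sum_range_succ, Finset.sum_range_succ, Finset.sum_range_succ,
    Finset.sum_range_succ, Finset.sum_range_zero,
    card_S0 hD.1 x, card_S1 hD x, card_S2 hD hμ x, card_S3 hD hμ hk x]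
  obtain ⟨t, rfl⟩ : ∃ t, r = t + 3 := ⟨r - 3, by omega⟩
  rw [show t + 3 - 1 = t + 2 by omega]
  ring

private lemma fiber_step (hAnt : IsAntipodal Γ) {a b : V} (hab : Γ.dist a b = 3)
    (w : V) (hw : w = a ∨ Γ.dist a w = 3) : w = b ∨ Γ.dist b w = 3 := by
  have h1 : a = w ∨ Γ.dist a w = 3 := by
    rcases hw with rfl | h
    · exact Or.inl rfl
    · exact Or.inr h
  have h2 : b = a ∨ Γ.dist b a = 3 := Or.inr (by rwa [SimpleGraph.dist_comm])
  rcases hAnt b a w h2 h1 with h | h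
  · exact Or.inl h.symm
  · exact Or.inr h

private lemma fiber_eq (hAnt : IsAntipodal Γ) {x y : V} (hxy : Γ.dist x y = 3) :
    Ff Γ x = Ff Γ y := by
  have hyx : Γ.dist y x = 3 := by rwa [SimpleGraph.dist_comm]
  ext z
  simp only [mem_Ff]
  constructor
  · exact fiber_step hAnt hxy z
  · exact fiber_step hAnt hyx z

private lemma fiber_disj (hAnt : IsAntipodal Γ) {x y : V} (hxy : x ≠ y)
    (h3 : Γ.dist x y ≠ 3) : Disjoint (Ff Γ x) (Ff Γ y) := by
  rw [Finset.disjoint_left]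
  intro z hz1 hz2
  rw [mem_Ff] at hz1 hz2
  have hxz : x = z ∨ Γ.dist x z = 3 := by
    rcases hz1 with h | h
    exacts [Or.inl h.symm, Or.inr h]
  have hzy : z = y ∨ Γ.dist z y = 3 := by
    rcases hz2 with h | h
    exacts [Or.inl h, Or.inr (by rwa [SimpleGraph.dist_comm])]
  rcases hAnt x z y hxz hzy with h | h
  · exact hxy h
  · exact h3 h

private lemma common_mu (hD : IsDRG3 Γ k r μ) (hr : 2 < r) (hk : k = r * μ + 1)
    {x y : V} (h12 : Γ.dist x y = 1 ∨ Γ.dist x y = 2) :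
    (Sf Γ x 1 ∩ Sf Γ y 1).card = μ := by
  rcases h12 with h1 | h2
  · -- distance 1 : partition the neighbourhood of y by distance from x
    have hpart : (Sf Γ y 1).card
        = ∑ j ∈ range 3, ((Sf Γ y 1).filter fun z => Γ.dist x z = j).card :=
      card_eq_sum_card_fiberwise (fun z hz => mem_range.2 (by
        have hz' := mem_Sf.1 hz
        have ht := hD.1.dist_triangle (u := x) (v := y) (w := z)
        omega))
    have e0 : ((Sf Γ y 1).filter fun z => Γ.dist x z = 0)
        = univ.filter fun z => Γ.dist x z = 1 - 1 ∧ Γ.Adj z y := by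
      ext z
      simp only [Sf, mem_filter, mem_univ, true_and]
      rw [show (1 : ℕ) - 1 = 0 by omega]
      constructor
      · rintro ⟨hzy, hxz⟩
        exact ⟨hxz, by rw [← dist_eq_one_iff_adj, SimpleGraph.dist_comm]; exact hzy⟩
      · rintro ⟨hxz, hzy⟩
        exact ⟨by rw [SimpleGraph.dist_comm, dist_eq_one_iff_adj]; exact hzy, hxz⟩
    have e2 : ((Sf Γ y 1).filter fun z => Γ.dist x z = 2)
        = univ.filter fun z => Γ.dist x z = 1 + 1 ∧ Γ.Adj z y := by
      ext z
      simp only [Sf, mem_filter, mem_univ, true_and]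
      constructor
      · rintro ⟨hzy, hxz⟩
        exact ⟨hxz, by rw [← dist_eq_one_iff_adj, SimpleGraph.dist_comm]; exact hzy⟩
      · rintro ⟨hxz, hzy⟩
        exact ⟨by rw [SimpleGraph.dist_comm, dist_eq_one_iff_adj]; exact hzy, hxz⟩
    have e1 : ((Sf Γ y 1).filter fun z => Γ.dist x z = 1) = Sf Γ x 1 ∩ Sf Γ y 1 := by
      ext z
      simp only [Sf, mem_filter, mem_univ, true_and, mem_inter]
      tauto
    rw [card_S1 hD y] at hpart
    rw [Finset.sum_range_succ, Finset.sum_range_succ, Finset.sum_range_succ,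
      Finset.sum_range_zero, e0, e1, e2, cset hD (by norm_num) h1,
      bset hD (by norm_num) h1] at hpart
    rw [show cArr k μ 1 = 1 from rfl, show bArr k r μ 1 = (r - 1) * μ from rfl] at hpart
    obtain ⟨t, rfl⟩ : ∃ t, r = t + 3 := ⟨r - 3, by omega⟩
    rw [show t + 3 - 1 = t + 2 by omega] at hpart
    subst hk
    ring_nf at hpart ⊢
    linarith
  · -- distance 2 : this is exactly c₂
    have h := cset hD (i := 2) (by norm_num) h2
    rw [show (2 : ℕ) - 1 = 1 by omega, show cArr k μ 2 = μ from rfl] at h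
    rw [← h]
    congr 1
    ext z
    simp only [Sf, mem_inter, mem_filter, mem_univ, true_and]
    constructor
    · rintro ⟨hxz, hzy⟩
      exact ⟨hxz, by rw [← dist_eq_one_iff_adj, SimpleGraph.dist_comm]; exact hzy⟩
    · rintro ⟨hxz, hzy⟩
      exact ⟨hxz, by rw [SimpleGraph.dist_comm, dist_eq_one_iff_adj]; exact hzy⟩

private lemma card_N_inter_F (hD : IsDRG3 Γ k r μ) {x y : V}
    (h12 : Γ.dist x y = 1 ∨ Γ.dist x y = 2) :
    (Sf Γ x 1 ∩ Ff Γ y).card = 1 := by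
  rcases h12 with h1 | h2
  · have e : Sf Γ x 1 ∩ Ff Γ y = {y} := by
      ext z
      simp only [mem_inter, mem_Sf, mem_Ff, Finset.mem_singleton]
      constructor
      · rintro ⟨hxz, h | h⟩
        · exact h
        · exfalso
          have ht := hD.1.dist_triangle (u := y) (v := x) (w := z)
          rw [SimpleGraph.dist_comm] at h1
          omega
      · rintro rfl
        exact ⟨h1, Or.inl rfl⟩
    rw [e, Finset.card_singleton]
  · have hyx : Γ.dist y x = 2 := by rwa [SimpleGraph.dist_comm]
    have h := bset hD (i := 2) (x := y) (y := x) (by norm_num) hyx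
    rw [show bArr k r μ 2 = 1 from rfl] at h
    have e : Sf Γ x 1 ∩ Ff Γ y
        = univ.filter fun z => Γ.dist y z = 2 + 1 ∧ Γ.Adj z x := by
      ext z
      simp only [Sf, Ff, mem_inter, mem_filter, mem_univ, true_and]
      constructor
      · rintro ⟨hxz, h | h⟩
        · exfalso; rw [h] at hxz; omega
        · exact ⟨h, by rw [← dist_eq_one_iff_adj, SimpleGraph.dist_comm]; exact hxz⟩
      · rintro ⟨hyz, hzx⟩
        exact ⟨by rw [SimpleGraph.dist_comm, dist_eq_one_iff_adj]; exact hzx, Or.inr hyz⟩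
    rw [e]
    exact h

end Aux

/-- Γ₂ is a Deza graph with parameters (r(k+1), (r−1)k, b, a) where
{a,b} = {(r−1)²μ, k(r−2)}. -/
theorem stmt5 [Fintype V] (Γ : SimpleGraph V) (k r μ : ℕ)
    (hr : 2 < r) (hμ : 0 < μ) (hk : k = r * μ + 1)
    (hDRG : IsDRG3 Γ k r μ) (hAnt : IsAntipodal Γ) :
    Fintype.card V = r * (k + 1) ∧
    (∀ x : V, ((distGraph Γ 2).neighborSet x).ncard = (r - 1) * k) ∧
    ∀ x y : V, x ≠ y →
      ((distGraph Γ 2).commonNeighbors x y).ncard = (r - 1) ^ 2 * μ ∨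
      ((distGraph Γ 2).commonNeighbors x y).ncard = k * (r - 2) := by
  classical
  obtain ⟨x0, y0, -⟩ := hDRG.2.2.1
  have hconn := hDRG.1
  have hle := hDRG.2.1
  have hadj2 : ∀ u v : V, (distGraph Γ 2).Adj u v ↔ Γ.dist u v = 2 := by
    intro u v
    simp only [distGraph, fromRel_adj]
    constructor
    · rintro ⟨hne, h | h⟩
      · exact h
      · rwa [SimpleGraph.dist_comm]
    · intro h
      refine ⟨fun he => ?_, Or.inl h⟩
      rw [he, SimpleGraph.dist_self] at h
      exact absurd h (by norm_num)
  have hV : (Finset.univ : Finset V).card = r * (k + 1) := card_V' hDRG hr hμ hk x0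
  refine ⟨by rw [← Finset.card_univ, hV], ?_, ?_⟩
  · intro x
    have hnb : (distGraph Γ 2).neighborSet x = ↑(Sf Γ x 2) := by
      ext z
      simp [mem_neighborSet, hadj2, mem_Sf]
    rw [hnb, Set.ncard_coe_finset, card_S2 hDRG hμ x]
  · intro x y hxy
    have hT : (distGraph Γ 2).commonNeighbors x y = ↑(Sf Γ x 2 ∩ Sf Γ y 2) := by
      ext z
      simp [commonNeighbors, mem_neighborSet, hadj2, mem_Sf]
    rw [hT, Set.ncard_coe_finset]
    have hd0 : Γ.dist x y ≠ 0 := fun h => hxy (hconn.dist_eq_zero_iff.1 h)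
    have hd3 : Γ.dist x y ≤ 3 := hle x y
    by_cases h3 : Γ.dist x y = 3
    · -- antipodal pair : answer k(r-2)
      right
      have hFxy : Ff Γ x = Ff Γ y := fiber_eq hAnt h3
      set A : Finset V := Ff Γ x ∪ Sf Γ x 1 ∪ Sf Γ y 1 with hA
      have hTeq : Sf Γ x 2 ∩ Sf Γ y 2 = Finset.univ \ A := by
        ext z
        simp only [hA, Finset.mem_inter, Finset.mem_sdiff, Finset.mem_univ, true_and,
          Finset.mem_union, mem_Sf, mem_Ff, not_or]
        constructor
        · rintro ⟨h2x, h2y⟩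
          refine ⟨⟨⟨?_, ?_⟩, ?_⟩, ?_⟩
          · rintro rfl; rw [SimpleGraph.dist_self] at h2x; omega
          · omega
          · omega
          · omega
        · rintro ⟨⟨⟨hzx, hz3⟩, hz1x⟩, hz1y⟩
          have hzx0 : Γ.dist x z ≠ 0 := fun h => hzx (hconn.dist_eq_zero_iff.1 h).symm
          have hlx := hle x z
          have hly := hle y z
          have hzy : z ∉ Ff Γ y := by rw [← hFxy, mem_Ff]; tauto
          rw [mem_Ff, not_or] at hzy
          have hzy0 : Γ.dist y z ≠ 0 := fun h => hzy.1 (hconn.dist_eq_zero_iff.1 h).symm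
          exact ⟨by omega, by omega⟩
      have hd1 : Disjoint (Ff Γ x) (Sf Γ x 1) := by
        rw [Finset.disjoint_left]
        intro z hz1 hz2
        rw [mem_Ff] at hz1
        rw [mem_Sf] at hz2
        rcases hz1 with h | h
        · rw [h, SimpleGraph.dist_self] at hz2; omega
        · omega
      have hd2 : Disjoint (Ff Γ x ∪ Sf Γ x 1) (Sf Γ y 1) := by
        rw [Finset.disjoint_left]
        intro z hz1 hz2
        rw [mem_Sf] at hz2
        rw [Finset.mem_union] at hz1
        rcases hz1 with hz1 | hz1
        · have : z ∈ Ff Γ y := by rwa [← hFxy]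
          rw [mem_Ff] at this
          rcases this with h | h
          · rw [h, SimpleGraph.dist_self] at hz2; omega
          · omega
        · rw [mem_Sf] at hz1
          have ht := hconn.dist_triangle (u := x) (v := z) (w := y)
          rw [SimpleGraph.dist_comm (u := z)] at ht
          omega
      have hAcard : A.card = r + k + k := by
        rw [hA, Finset.card_union_of_disjoint hd2, Finset.card_union_of_disjoint hd1,
          card_Ff hDRG hr hμ hk x, card_S1 hDRG x, card_S1 hDRG y]
      have hsub := Finset.card_sdiff_add_card_eq_card (Finset.subset_univ A)
      rw [hAcard, hV] at hsub
      rw [hTeq]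
      obtain ⟨t, rfl⟩ : ∃ t, r = t + 3 := ⟨r - 3, by omega⟩
      rw [show t + 3 - 2 = t + 1 by omega]
      subst hk
      ring_nf at hsub ⊢
      linarith
    · -- distance 1 or 2 : answer (r-1)²μ
      left
      have h12 : Γ.dist x y = 1 ∨ Γ.dist x y = 2 := by omega
      have h21 : Γ.dist y x = 1 ∨ Γ.dist y x = 2 := by rw [SimpleGraph.dist_comm]; exact h12
      have hFdisj : Disjoint (Ff Γ x) (Ff Γ y) := fiber_disj hAnt hxy h3
      set A : Finset V := (Ff Γ x ∪ Ff Γ y) ∪ (Sf Γ x 1 ∪ Sf Γ y 1) with hA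
      have hTeq : Sf Γ x 2 ∩ Sf Γ y 2 = Finset.univ \ A := by
        ext z
        simp only [hA, Finset.mem_inter, Finset.mem_sdiff, Finset.mem_univ, true_and,
          Finset.mem_union, mem_Sf, mem_Ff, not_or]
        constructor
        · rintro ⟨h2x, h2y⟩
          refine ⟨⟨⟨?_, ?_⟩, ⟨?_, ?_⟩⟩, by omega, by omega⟩
          · rintro rfl; rw [SimpleGraph.dist_self] at h2x; omega
          · omega
          · rintro rfl; rw [SimpleGraph.dist_self] at h2y; omega
          · omega
        · rintro ⟨⟨⟨hzx, hzx3⟩, ⟨hzy, hzy3⟩⟩, hz1x, hz1y⟩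
          have hzx0 : Γ.dist x z ≠ 0 := fun h => hzx (hconn.dist_eq_zero_iff.1 h).symm
          have hzy0 : Γ.dist y z ≠ 0 := fun h => hzy (hconn.dist_eq_zero_iff.1 h).symm
          have hlx := hle x z
          have hly := hle y z
          exact ⟨by omega, by omega⟩
      have hFF : (Ff Γ x ∪ Ff Γ y).card = r + r := by
        rw [Finset.card_union_of_disjoint hFdisj, card_Ff hDRG hr hμ hk x,
          card_Ff hDRG hr hμ hk y]
      have hNN : (Sf Γ x 1 ∪ Sf Γ y 1).card + μ = k + k := by
        have := Finset.card_union_add_card_inter (Sf Γ x 1) (Sf Γ y 1)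
        rw [common_mu hDRG hr hk h12, card_S1 hDRG x, card_S1 hDRG y] at this
        exact this
      have hIeq : (Ff Γ x ∪ Ff Γ y) ∩ (Sf Γ x 1 ∪ Sf Γ y 1)
          = (Sf Γ x 1 ∩ Ff Γ y) ∪ (Sf Γ y 1 ∩ Ff Γ x) := by
        ext z
        simp only [Finset.mem_inter, Finset.mem_union, mem_Sf, mem_Ff]
        constructor
        · rintro ⟨hF, hN⟩
          rcases hF with hF | hF <;> rcases hN with hN | hN
          · exfalso
            rcases hF with h | h
            · rw [h, SimpleGraph.dist_self] at hN; omega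
            · omega
          · exact Or.inr ⟨hN, hF⟩
          · exact Or.inl ⟨hN, hF⟩
          · exfalso
            rcases hF with h | h
            · rw [h, SimpleGraph.dist_self] at hN; omega
            · omega
        · rintro (⟨hN, hF⟩ | ⟨hN, hF⟩)
          · exact ⟨Or.inr hF, Or.inl hN⟩
          · exact ⟨Or.inl hF, Or.inr hN⟩
      have hIdisj : Disjoint (Sf Γ x 1 ∩ Ff Γ y) (Sf Γ y 1 ∩ Ff Γ x) := by
        rw [Finset.disjoint_left]
        intro z hz1 hz2
        rw [Finset.mem_inter] at hz1 hz2
        exact (Finset.disjoint_left.1 hFdisj) hz2.2 hz1.2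
      have hI : ((Ff Γ x ∪ Ff Γ y) ∩ (Sf Γ x 1 ∪ Sf Γ y 1)).card = 2 := by
        rw [hIeq, Finset.card_union_of_disjoint hIdisj,
          card_N_inter_F hDRG h12, card_N_inter_F hDRG h21]
      have hAc := Finset.card_union_add_card_inter (Ff Γ x ∪ Ff Γ y) (Sf Γ x 1 ∪ Sf Γ y 1)
      rw [hI, hFF] at hAc
      have hsub := Finset.card_sdiff_add_card_eq_card (Finset.subset_univ A)
      rw [hV] at hsub
      rw [hTeq]
      obtain ⟨t, rfl⟩ : ∃ t, r = t + 3 := ⟨r - 3, by omega⟩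
      rw [show t + 3 - 1 = t + 2 by omega]
      subst hk
      have hAA : A.card + 2 = (t + 3 + (t + 3)) + (Sf Γ x 1 ∪ Sf Γ y 1).card := by
        rw [hA]; exact hAc
      ring_nf at hsub hAA hNN ⊢
      nlinarith [hsub, hAA, hNN]
end

section
/- Let Γ be an antipodal distance-regular graph of diameter 3 with intersection array {k, (r−1)μ, 1; 1, μ, k}, k = rμ + 1, r ∉ {2, μ+2}. Define Ω^c as the graph on the vertex set of Γ₂ joining distinct vertices x, y iff x and y have exactly c common neighbors in Γ₂. Then Ω^{k(r−2)} equals Γ₃, the graph joining vertices at distance 3 in Γ, which is a disjoint union of k+1 cliques of size r. -/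
open SimpleGraph

variable {V : Type*}

set_option linter.unusedSectionVars false
set_option maxHeartbeats 1000000

section Helpers
variable [Fintype V]

lemma ncard_eq_filter (p : V → Prop) [DecidablePred p] :
    {z | p z}.ncard = (Finset.univ.filter p).card := by
  rw [← Set.ncard_coe_finset]; congr 1; ext z; simp

lemma doubleCount0 (s t : Finset V) (p : V → V → Prop) [DecidableRel p] :
    ∑ z ∈ s, (t.filter (fun w => p z w)).card
      = ∑ w ∈ t, (s.filter (fun z => p z w)).card := by
  simp only [Finset.card_filter]
  exact Finset.sum_comm

lemma doubleCount (S T : Set V) (p : V → V → Prop) (a b : ℕ)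
    (h1 : ∀ z ∈ S, {w | w ∈ T ∧ p z w}.ncard = a)
    (h2 : ∀ w ∈ T, {z | z ∈ S ∧ p z w}.ncard = b) :
    S.ncard * a = T.ncard * b := by
  classical
  have hS : S.ncard = (Finset.univ.filter (· ∈ S)).card := ncard_eq_filter (· ∈ S)
  have hT : T.ncard = (Finset.univ.filter (· ∈ T)).card := ncard_eq_filter (· ∈ T)
  rw [hS, hT]
  calc (Finset.univ.filter (· ∈ S)).card * a
      = ∑ _z ∈ Finset.univ.filter (· ∈ S), a := by rw [Finset.sum_const, smul_eq_mul]
    _ = ∑ z ∈ Finset.univ.filter (· ∈ S),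
          ((Finset.univ.filter (· ∈ T)).filter (fun w => p z w)).card := by
        refine Finset.sum_congr rfl fun z hz => ?_
        rw [← h1 z (by simpa using hz), ncard_eq_filter, Finset.filter_filter]
    _ = ∑ w ∈ Finset.univ.filter (· ∈ T),
          ((Finset.univ.filter (· ∈ S)).filter (fun z => p z w)).card :=
        doubleCount0 _ _ _
    _ = ∑ w ∈ Finset.univ.filter (· ∈ T), b := by
        refine Finset.sum_congr rfl fun w hw => ?_
        rw [← h2 w (by simpa using hw), ncard_eq_filter, Finset.filter_filter]
    _ = (Finset.univ.filter (· ∈ T)).card * b := by rw [Finset.sum_const, smul_eq_mul]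

lemma fiber4 (s : Finset V) (g : V → ℕ) (h : ∀ z ∈ s, g z ≤ 3) :
    s.card = (s.filter (fun z => g z = 0)).card + (s.filter (fun z => g z = 1)).card
      + (s.filter (fun z => g z = 2)).card + (s.filter (fun z => g z = 3)).card := by
  rw [Finset.card_eq_sum_card_fiberwise (f := g) (t := Finset.range 4)
    (fun x hx => Finset.mem_range.mpr (by have := h x hx; omega))]
  simp [Finset.sum_range_succ]

lemma ncard_fiber4 (q : V → Prop) (g : V → ℕ) (h : ∀ z, q z → g z ≤ 3) :
    {z | q z}.ncard = {z | q z ∧ g z = 0}.ncard + {z | q z ∧ g z = 1}.ncard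
      + {z | q z ∧ g z = 2}.ncard + {z | q z ∧ g z = 3}.ncard := by
  classical
  simp only [ncard_eq_filter, ← Finset.filter_filter]
  exact fiber4 _ g (fun z hz => h z (by simpa using hz))

section Main
variable (Γ : SimpleGraph V) (k r μ : ℕ)
  (hconn : Γ.Connected) (hμ : 0 < μ) (hk : k = r * μ + 1)
  (hdiam : ∀ x y : V, Γ.dist x y ≤ 3)
  (hcnt : ∀ (i : ℕ) (x y : V), i ≤ 3 → Γ.dist x y = i →
    {z : V | Γ.dist x z = i - 1 ∧ Γ.Adj z y}.ncard = cArr k μ i ∧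
    {z : V | Γ.dist x z = i + 1 ∧ Γ.Adj z y}.ncard = bArr k r μ i)

include hcnt in
lemma sphere1 (x : V) : {z : V | Γ.dist x z = 1}.ncard = k := by
  have h := (hcnt 0 x x (by norm_num) (by simp)).2
  have : {z : V | Γ.dist x z = 0 + 1 ∧ Γ.Adj z x} = {z : V | Γ.dist x z = 1} := by
    ext z
    simp only [Set.mem_setOf_eq, zero_add, and_iff_left_iff_imp]
    intro hz
    exact (SimpleGraph.dist_eq_one_iff_adj.mp hz).symm
  rw [this] at h
  exact h

include hμ hcnt in
lemma sphere2 (x : V) : {z : V | Γ.dist x z = 2}.ncard = k * (r - 1) := by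
  have key := doubleCount {z : V | Γ.dist x z = 1} {z : V | Γ.dist x z = 2}
    (fun z w => Γ.Adj z w) ((r - 1) * μ) μ
    (fun z hz => by
      have h := (hcnt 1 x z (by norm_num) hz).2
      refine Eq.trans (congrArg Set.ncard ?_) h
      ext w
      exact and_congr Iff.rfl (Γ.adj_comm z w))
    (fun w hw => by
      have h := (hcnt 2 x w (by norm_num) hw).1
      exact h)
  rw [sphere1 Γ k r μ hcnt x] at key
  have : (k * (r - 1)) * μ = {z : V | Γ.dist x z = 2}.ncard * μ := by
    rw [← key]; ring
  exact (Nat.eq_of_mul_eq_mul_right hμ this).symm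

include hμ hk hcnt in
lemma sphere3 (x : V) : {z : V | Γ.dist x z = 3}.ncard = r - 1 := by
  have key := doubleCount {z : V | Γ.dist x z = 2} {z : V | Γ.dist x z = 3}
    (fun z w => Γ.Adj z w) 1 k
    (fun z hz => by
      have h := (hcnt 2 x z (by norm_num) hz).2
      refine Eq.trans (congrArg Set.ncard ?_) h
      ext w
      exact and_congr Iff.rfl (Γ.adj_comm z w))
    (fun w hw => by
      have h := (hcnt 3 x w (by norm_num) hw).1
      exact h)
  rw [sphere2 Γ k r μ hμ hcnt x, mul_one, mul_comm k (r-1)] at key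
  have hkpos : 0 < k := by omega
  exact (Nat.eq_of_mul_eq_mul_right hkpos key).symm

variable (hAnt : ∀ x y z : V, (x = y ∨ Γ.dist x y = 3) → (y = z ∨ Γ.dist y z = 3) →
    (x = z ∨ Γ.dist x z = 3))

lemma and_comm_set (P Q : V → Prop) : {z | P z ∧ Q z} = {z | Q z ∧ P z} := by
  ext z; exact and_comm

include hconn hdiam hμ hk hcnt hAnt in
lemma case3 (hr : 2 < r) (x y : V) (hxy : Γ.dist x y = 3) :
    {z : V | Γ.dist x z = 2 ∧ Γ.dist y z = 2}.ncard = k * (r - 2) := by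
  obtain ⟨a, rfl⟩ : ∃ a, r = a + 3 := ⟨r - 3, by omega⟩
  have hfib := ncard_fiber4 (fun z => Γ.dist x z = 2) (fun z => Γ.dist y z)
    (fun z _ => hdiam y z)
  beta_reduce at hfib
  have p0 : {z : V | Γ.dist x z = 2 ∧ Γ.dist y z = 0}.ncard = 0 := by
    have he : {z : V | Γ.dist x z = 2 ∧ Γ.dist y z = 0} = ∅ := by
      ext z
      simp only [Set.mem_setOf_eq, Set.mem_empty_iff_false, iff_false, not_and]
      intro h1 h2
      rw [hconn.dist_eq_zero_iff] at h2
      subst h2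
      omega
    rw [he, Set.ncard_empty]
  have p1 : {z : V | Γ.dist x z = 2 ∧ Γ.dist y z = 1}.ncard = k := by
    have h := (hcnt 3 x y (le_refl 3) hxy).1
    refine Eq.trans (congrArg Set.ncard ?_) h
    ext z
    exact and_congr Iff.rfl
      (Iff.trans SimpleGraph.dist_eq_one_iff_adj (Γ.adj_comm y z))
  have p3 : {z : V | Γ.dist x z = 2 ∧ Γ.dist y z = 3}.ncard = 0 := by
    have he : {z : V | Γ.dist x z = 2 ∧ Γ.dist y z = 3} = ∅ := by
      ext z
      simp only [Set.mem_setOf_eq, Set.mem_empty_iff_false, iff_false, not_and]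
      intro h1 h2
      rcases hAnt x y z (Or.inr hxy) (Or.inr h2) with h | h
      · subst h; simp [SimpleGraph.dist_self] at h1
      · omega
    rw [he, Set.ncard_empty]
  rw [p0, p1, p3, sphere2 Γ k (a+3) μ hμ hcnt x] at hfib
  rw [show a + 3 - 2 = a + 1 by omega]
  rw [show a + 3 - 1 = a + 2 by omega,
    show k * (a + 2) = k * (a + 1) + k from by ring] at hfib
  generalize k * (a + 1) = m at hfib ⊢
  omega

include hconn hdiam hμ hk hcnt hAnt in
lemma case1 (hr : 2 < r) (x y : V) (hxy : Γ.dist x y = 1) :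
    {z : V | Γ.dist x z = 2 ∧ Γ.dist y z = 2}.ncard = (r - 1) * (r - 1) * μ := by
  obtain ⟨a, rfl⟩ : ∃ a, r = a + 3 := ⟨r - 3, by omega⟩
  have hfib := ncard_fiber4 (fun z => Γ.dist x z = 2) (fun z => Γ.dist y z)
    (fun z _ => hdiam y z)
  beta_reduce at hfib
  have p0 : {z : V | Γ.dist x z = 2 ∧ Γ.dist y z = 0}.ncard = 0 := by
    have he : {z : V | Γ.dist x z = 2 ∧ Γ.dist y z = 0} = ∅ := by
      ext z
      simp only [Set.mem_setOf_eq, Set.mem_empty_iff_false, iff_false, not_and]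
      intro h1 h2
      rw [hconn.dist_eq_zero_iff] at h2
      subst h2
      omega
    rw [he, Set.ncard_empty]
  have p1 : {z : V | Γ.dist x z = 2 ∧ Γ.dist y z = 1}.ncard = (a + 3 - 1) * μ := by
    have h := (hcnt 1 x y (by norm_num) hxy).2
    refine Eq.trans (congrArg Set.ncard ?_) h
    ext z
    exact and_congr Iff.rfl
      (Iff.trans SimpleGraph.dist_eq_one_iff_adj (Γ.adj_comm y z))
  have p3 : {z : V | Γ.dist x z = 2 ∧ Γ.dist y z = 3}.ncard = a + 2 := by
    have he : {z : V | Γ.dist x z = 2 ∧ Γ.dist y z = 3} = {z : V | Γ.dist y z = 3} := by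
      ext z
      simp only [Set.mem_setOf_eq, and_iff_right_iff_imp]
      intro h3
      have hne3 : Γ.dist x z ≠ 3 := by
        intro h
        rcases hAnt y z x (Or.inr h3) (Or.inr (by rw [SimpleGraph.dist_comm]; exact h))
          with hh | hh
        · subst hh; simp [SimpleGraph.dist_self] at hxy
        · rw [SimpleGraph.dist_comm] at hh; omega
      have hne0 : Γ.dist x z ≠ 0 := by
        intro h
        rw [hconn.dist_eq_zero_iff] at h
        subst h
        rw [SimpleGraph.dist_comm] at h3
        omega
      have hne1 : Γ.dist x z ≠ 1 := by
        intro h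
        have := hconn.dist_triangle (u := y) (v := x) (w := z)
        rw [SimpleGraph.dist_comm (u := y) (v := x)] at this
        omega
      have := hdiam x z
      omega
    rw [he]
    have := sphere3 Γ k (a+3) μ hμ hk hcnt y
    rw [this]
    omega
  rw [p0, p1, p3, sphere2 Γ k (a+3) μ hμ hcnt x] at hfib
  rw [show a + 3 - 1 = a + 2 by omega] at hfib ⊢
  rw [show k * (a + 2) = (a + 2) * μ + (a + 2) * (a + 2) * μ + (a + 2) from by
    subst hk; ring] at hfib
  generalize (a + 2) * μ = m1 at hfib ⊢
  generalize (a + 2) * (a + 2) * μ = m2 at hfib ⊢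
  omega

include hconn hdiam hμ hk hcnt hAnt in
lemma case2 (hr : 2 < r) (x y : V) (hxy : Γ.dist x y = 2) :
    {z : V | Γ.dist x z = 2 ∧ Γ.dist y z = 2}.ncard + (r - 2) = k * (r - 2) + μ := by
  obtain ⟨a, rfl⟩ : ∃ a, r = a + 3 := ⟨r - 3, by omega⟩
  have hfib := ncard_fiber4 (fun z => Γ.dist x z = 2) (fun z => Γ.dist y z)
    (fun z _ => hdiam y z)
  beta_reduce at hfib
  have p0 : {z : V | Γ.dist x z = 2 ∧ Γ.dist y z = 0}.ncard = 1 := by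
    have he : {z : V | Γ.dist x z = 2 ∧ Γ.dist y z = 0} = {y} := by
      ext z
      simp only [Set.mem_setOf_eq, Set.mem_singleton_iff]
      constructor
      · rintro ⟨h1, h2⟩
        rw [hconn.dist_eq_zero_iff] at h2
        exact h2.symm
      · rintro rfl
        exact ⟨hxy, SimpleGraph.dist_self⟩
    rw [he, Set.ncard_singleton]
  -- neighbours of y partition
  have hnb := ncard_fiber4 (fun z => Γ.dist y z = 1) (fun z => Γ.dist x z)
    (fun z _ => hdiam x z)
  beta_reduce at hnb
  have n0 : {z : V | Γ.dist y z = 1 ∧ Γ.dist x z = 0}.ncard = 0 := by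
    have he : {z : V | Γ.dist y z = 1 ∧ Γ.dist x z = 0} = ∅ := by
      ext z
      simp only [Set.mem_setOf_eq, Set.mem_empty_iff_false, iff_false, not_and]
      intro h1 h2
      rw [hconn.dist_eq_zero_iff] at h2
      subst h2
      rw [SimpleGraph.dist_comm] at h1
      omega
    rw [he, Set.ncard_empty]
  have n1 : {z : V | Γ.dist y z = 1 ∧ Γ.dist x z = 1}.ncard = μ := by
    have h := (hcnt 2 x y (by norm_num) hxy).1
    refine Eq.trans (congrArg Set.ncard ?_) h
    ext z
    constructor
    · rintro ⟨h1, h2⟩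
      exact ⟨h2, (Γ.adj_comm y z).mp (SimpleGraph.dist_eq_one_iff_adj.mp h1)⟩
    · rintro ⟨h1, h2⟩
      exact ⟨SimpleGraph.dist_eq_one_iff_adj.mpr ((Γ.adj_comm z y).mp h2), h1⟩
  have n3 : {z : V | Γ.dist y z = 1 ∧ Γ.dist x z = 3}.ncard = 1 := by
    have h := (hcnt 2 x y (by norm_num) hxy).2
    refine Eq.trans (congrArg Set.ncard ?_) h
    ext z
    constructor
    · rintro ⟨h1, h2⟩
      exact ⟨h2, (Γ.adj_comm y z).mp (SimpleGraph.dist_eq_one_iff_adj.mp h1)⟩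
    · rintro ⟨h1, h2⟩
      exact ⟨SimpleGraph.dist_eq_one_iff_adj.mpr ((Γ.adj_comm z y).mp h2), h1⟩
  rw [n0, n1, n3, sphere1 Γ k (a+3) μ hcnt y] at hnb
  -- distance-3-from-y partition
  have h3f := ncard_fiber4 (fun z => Γ.dist y z = 3) (fun z => Γ.dist x z)
    (fun z _ => hdiam x z)
  beta_reduce at h3f
  have m0 : {z : V | Γ.dist y z = 3 ∧ Γ.dist x z = 0}.ncard = 0 := by
    have he : {z : V | Γ.dist y z = 3 ∧ Γ.dist x z = 0} = ∅ := by
      ext z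
      simp only [Set.mem_setOf_eq, Set.mem_empty_iff_false, iff_false, not_and]
      intro h1 h2
      rw [hconn.dist_eq_zero_iff] at h2
      subst h2
      rw [SimpleGraph.dist_comm] at h1
      omega
    rw [he, Set.ncard_empty]
  have m1 : {z : V | Γ.dist y z = 3 ∧ Γ.dist x z = 1}.ncard = 1 := by
    have h := (hcnt 2 y x (by norm_num) (by rw [SimpleGraph.dist_comm]; exact hxy)).2
    refine Eq.trans (congrArg Set.ncard ?_) h
    ext z
    exact and_congr Iff.rfl
      (Iff.trans SimpleGraph.dist_eq_one_iff_adj (Γ.adj_comm x z))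
  have m3 : {z : V | Γ.dist y z = 3 ∧ Γ.dist x z = 3}.ncard = 0 := by
    have he : {z : V | Γ.dist y z = 3 ∧ Γ.dist x z = 3} = ∅ := by
      ext z
      simp only [Set.mem_setOf_eq, Set.mem_empty_iff_false, iff_false, not_and]
      intro h1 h2
      rcases hAnt x z y (Or.inr h2) (Or.inr (by rw [SimpleGraph.dist_comm]; exact h1))
        with hh | hh
      · subst hh; simp [SimpleGraph.dist_self] at hxy
      · omega
    rw [he, Set.ncard_empty]
  rw [m0, m1, m3, sphere3 Γ k (a+3) μ hμ hk hcnt y] at h3f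
  have hA : {z : V | Γ.dist x z = 2 ∧ Γ.dist y z = 1}.ncard
      = {z : V | Γ.dist y z = 1 ∧ Γ.dist x z = 2}.ncard := by
    rw [and_comm_set]
  have hB : {z : V | Γ.dist x z = 2 ∧ Γ.dist y z = 3}.ncard
      = {z : V | Γ.dist y z = 3 ∧ Γ.dist x z = 2}.ncard := by
    rw [and_comm_set]
  rw [p0, hA, hB, sphere2 Γ k (a+3) μ hμ hcnt x] at hfib
  rw [show a + 3 - 1 = a + 2 by omega] at hfib h3f
  rw [show a + 3 - 2 = a + 1 by omega]
  rw [show k * (a + 2) = k * (a + 1) + k from by ring] at hfib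
  generalize k * (a + 1) = m at hfib ⊢
  omega


include hconn hdiam hμ hk hcnt in
lemma cardV (hr : 2 < r) : Fintype.card V = (k + 1) * r := by
  classical
  obtain ⟨a, rfl⟩ : ∃ a, r = a + 3 := ⟨r - 3, by omega⟩
  obtain ⟨x⟩ := hconn.nonempty
  have hfib := ncard_fiber4 (fun _ : V => True) (fun z => Γ.dist x z)
    (fun z _ => hdiam x z)
  beta_reduce at hfib
  have e0 : {z : V | True ∧ Γ.dist x z = 0} = {x} := by
    ext z
    simp only [Set.mem_setOf_eq, true_and, Set.mem_singleton_iff]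
    rw [hconn.dist_eq_zero_iff]
    exact eq_comm
  have e1 : {z : V | True ∧ Γ.dist x z = 1} = {z : V | Γ.dist x z = 1} := by
    ext z; simp
  have e2 : {z : V | True ∧ Γ.dist x z = 2} = {z : V | Γ.dist x z = 2} := by
    ext z; simp
  have e3 : {z : V | True ∧ Γ.dist x z = 3} = {z : V | Γ.dist x z = 3} := by
    ext z; simp
  have eU : {z : V | True}.ncard = Fintype.card V := by
    rw [Set.setOf_true, Set.ncard_univ, Nat.card_eq_fintype_card]
  rw [e0, e1, e2, e3, eU, Set.ncard_singleton, sphere1 Γ k (a+3) μ hcnt x,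
    sphere2 Γ k (a+3) μ hμ hcnt x, sphere3 Γ k (a+3) μ hμ hk hcnt x] at hfib
  rw [show a + 3 - 1 = a + 2 by omega] at hfib
  rw [hfib]
  ring

end Main

lemma arith1 (a μ k : ℕ) (hk : k = (a + 3) * μ + 1) (hne : μ ≠ a + 1) :
    (a + 2) * (a + 2) * μ ≠ k * (a + 1) := by
  intro h
  have h' : (a * a + 4 * a + 3) * μ + μ = (a * a + 4 * a + 3) * μ + (a + 1) := by
    calc (a * a + 4 * a + 3) * μ + μ = (a + 2) * (a + 2) * μ := by ring
      _ = k * (a + 1) := h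
      _ = (a * a + 4 * a + 3) * μ + (a + 1) := by rw [hk]; ring
  exact hne (Nat.add_left_cancel h')

end Helpers

/-- Ω^{k(r−2)} = Γ₃, a disjoint union of k+1 cliques of size r. -/
theorem stmt8 [Fintype V] (Γ : SimpleGraph V) (k r μ : ℕ)
    (hr : 2 < r) (hμ : 0 < μ) (hk : k = r * μ + 1) (hne : r ≠ μ + 2)
    (hDRG : IsDRG3 Γ k r μ) (hAnt : IsAntipodal Γ) :
    SimpleGraph.fromRel
        (fun x y => ((distGraph Γ 2).commonNeighbors x y).ncard = k * (r - 2)) =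
      distGraph Γ 3 ∧
    ∃ f : V → Fin (k + 1),
      (∀ x y : V, x ≠ y → ((distGraph Γ 3).Adj x y ↔ f x = f y)) ∧
      ∀ i : Fin (k + 1), {x : V | f x = i}.ncard = r := by
  classical
  obtain ⟨hconn, hdiam, hex, hcnt⟩ := hDRG
  have hAnt' : ∀ x y z : V, (x = y ∨ Γ.dist x y = 3) → (y = z ∨ Γ.dist y z = 3) →
      (x = z ∨ Γ.dist x z = 3) := hAnt
  obtain ⟨a, rfl⟩ : ∃ a, r = a + 3 := ⟨r - 3, by omega⟩
  have hμne : μ ≠ a + 1 := fun h => hne (by omega)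
  have adjDG : ∀ i : ℕ, 0 < i → ∀ u v : V, ((distGraph Γ i).Adj u v ↔ Γ.dist u v = i) := by
    intro i hi u v
    simp only [distGraph, fromRel_adj]
    constructor
    · rintro ⟨hne', h | h⟩
      · exact h
      · rw [SimpleGraph.dist_comm]; exact h
    · intro h
      refine ⟨?_, Or.inl h⟩
      rintro rfl
      rw [SimpleGraph.dist_self] at h
      omega
  have hCN : ∀ x y : V, ((distGraph Γ 2).commonNeighbors x y)
      = {z : V | Γ.dist x z = 2 ∧ Γ.dist y z = 2} := by
    intro x y; ext z
    simp only [commonNeighbors, Set.mem_inter_iff, mem_neighborSet, Set.mem_setOf_eq]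
    rw [adjDG 2 (by norm_num), adjDG 2 (by norm_num)]
  have main : ∀ x y : V, x ≠ y →
      (((distGraph Γ 2).commonNeighbors x y).ncard = k * (a + 3 - 2) ↔ Γ.dist x y = 3) := by
    intro x y hnexy
    have hd : Γ.dist x y = 1 ∨ Γ.dist x y = 2 ∨ Γ.dist x y = 3 := by
      have := hdiam x y
      have := hconn.pos_dist_of_ne hnexy
      omega
    rw [hCN]
    rcases hd with h | h | h
    · constructor
      · intro hc
        rw [case1 Γ k (a+3) μ hconn hμ hk hdiam hcnt hAnt' hr x y h] at hc
        rw [show a + 3 - 1 = a + 2 by omega, show a + 3 - 2 = a + 1 by omega] at hc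
        exact absurd hc (arith1 a μ k (by omega) hμne)
      · intro hc; omega
    · constructor
      · intro hc
        have h2 := case2 Γ k (a+3) μ hconn hμ hk hdiam hcnt hAnt' hr x y h
        rw [hc] at h2
        rw [show a + 3 - 2 = a + 1 by omega] at h2
        omega
      · intro hc; omega
    · simp only [h, iff_true]
      exact case3 Γ k (a+3) μ hconn hμ hk hdiam hcnt hAnt' hr x y h
  constructor
  · ext x y
    rw [fromRel_adj, adjDG 3 (by norm_num)]
    constructor
    · rintro ⟨hnexy, h | h⟩
      · exact (main x y hnexy).mp h
      · rw [commonNeighbors_symm] at h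
        exact (main x y hnexy).mp h
    · intro h3
      have hnexy : x ≠ y := by
        rintro rfl
        rw [SimpleGraph.dist_self] at h3
        omega
      exact ⟨hnexy, Or.inl ((main x y hnexy).mpr h3)⟩
  · -- the antipodal partition
    let s : Setoid V := ⟨fun u v => u = v ∨ Γ.dist u v = 3,
      fun u => Or.inl rfl,
      fun {u v} h => by
        rcases h with h | h
        · exact Or.inl h.symm
        · exact Or.inr (by rwa [SimpleGraph.dist_comm]),
      fun {u v w} h1 h2 => hAnt' u v w h1 h2⟩
    have mkEq : ∀ u v2 : V, Quotient.mk s u = Quotient.mk s v2 ↔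
        (u = v2 ∨ Γ.dist u v2 = 3) := by
      intro u v2
      constructor
      · exact fun h => Quotient.exact h
      · exact fun h => Quotient.sound h
    have classCard : ∀ y : V, {x : V | Quotient.mk s x = Quotient.mk s y}.ncard = a + 3 := by
      intro y
      have hset : {x : V | Quotient.mk s x = Quotient.mk s y}
          = insert y {x : V | Γ.dist y x = 3} := by
        ext u
        rw [Set.mem_setOf_eq, mkEq, Set.mem_insert_iff, Set.mem_setOf_eq,
          SimpleGraph.dist_comm (u := y) (v := u)]
      rw [hset, Set.ncard_insert_of_notMem (by
          simp only [Set.mem_setOf_eq, SimpleGraph.dist_self]; omega)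
        (Set.toFinite _), sphere3 Γ k (a+3) μ hμ hk hcnt y]
      omega
    have cardQ : Fintype.card (Quotient s) = k + 1 := by
      have hsum := Finset.card_eq_sum_card_fiberwise
        (f := fun x : V => Quotient.mk s x) (s := Finset.univ) (t := Finset.univ)
        (fun x _ => Finset.mem_univ _)
      have hconst : ∀ q ∈ (Finset.univ : Finset (Quotient s)),
          (Finset.univ.filter (fun x : V => Quotient.mk s x = q)).card = a + 3 := by
        intro q _
        obtain ⟨y, rfl⟩ := Quotient.exists_rep q
        rw [← ncard_eq_filter]
        exact classCard y
      rw [Finset.sum_congr rfl hconst, Finset.sum_const, smul_eq_mul,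
        Finset.card_univ, Finset.card_univ] at hsum
      rw [cardV Γ k (a+3) μ hconn hμ hk hdiam hcnt hr] at hsum
      have := Nat.eq_of_mul_eq_mul_right (show 0 < a + 3 by omega) hsum
      omega
    let e := Fintype.equivFinOfCardEq cardQ
    refine ⟨fun v2 => e (Quotient.mk s v2), ?_, ?_⟩
    · intro x y hnexy
      rw [adjDG 3 (by norm_num), EmbeddingLike.apply_eq_iff_eq, mkEq]
      constructor
      · exact fun h => Or.inr h
      · rintro (h | h)
        · exact absurd h hnexy
        · exact h
    · intro i
      obtain ⟨y, hy⟩ := Quotient.exists_rep (e.symm i)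
      have hey : e (Quotient.mk s y) = i := by rw [hy]; exact e.apply_symm_apply i
      have hset : {x : V | e (Quotient.mk s x) = i}
          = {x : V | Quotient.mk s x = Quotient.mk s y} := by
        ext u
        simp only [Set.mem_setOf_eq]
        rw [← hey, EmbeddingLike.apply_eq_iff_eq]
      rw [hset, classCard y]
end

section
/- Let Γ be an antipodal distance-regular graph of diameter 3 with intersection array {k, (r−1)μ, 1; 1, μ, k}, k = rμ + 1, r ∉ {2, μ+2}, and let c = (r−1)²μ. Then the graph Ω^c on the vertices of Γ₂ joining distinct vertices with exactly c common neighbors in Γ₂ is isomorphic to the complete multipartite graph K_{(k+1)×r} (k+1 parts of size r, with the parts being the antipodal classes of Γ). -/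
open SimpleGraph

variable {V : Type*}

private lemma ncard_eq_card_filter {V : Type*} [Fintype V] (p : V → Prop) [DecidablePred p] :
    {z : V | p z}.ncard = (Finset.univ.filter p).card := by
  rw [← Set.ncard_coe_finset]
  congr 1
  ext z
  simp

private lemma double_count {V : Type*} [Fintype V] (S T : Finset V) (A : V → V → Prop)
    [∀ z w, Decidable (A z w)] :
    ∑ z ∈ S, (T.filter (fun w => A z w)).card = ∑ w ∈ T, (S.filter (fun z => A z w)).card := by
  simp_rw [Finset.card_filter]
  exact Finset.sum_comm

private lemma card_partition4 {V : Type*} [Fintype V] (S : Finset V) (g : V → ℕ)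
    (hg : ∀ z ∈ S, g z ≤ 3) :
    S.card = (S.filter (fun z => g z = 0)).card + (S.filter (fun z => g z = 1)).card
      + (S.filter (fun z => g z = 2)).card + (S.filter (fun z => g z = 3)).card := by
  rw [Finset.card_eq_sum_card_fiberwise (t := Finset.range 4) (f := g)
    (fun z hz => Finset.mem_range.mpr (by have := hg z hz; omega))]
  rw [Finset.sum_range_succ, Finset.sum_range_succ, Finset.sum_range_succ, Finset.sum_range_one]

set_option maxHeartbeats 1600000 in
/-- Ω^{(r−1)²μ} ≅ K_{(k+1)×r}, the parts being the antipodal classes. -/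
theorem stmt9 [Fintype V] (Γ : SimpleGraph V) (k r μ : ℕ)
    (hr : 2 < r) (hμ : 0 < μ) (hk : k = r * μ + 1) (hne : r ≠ μ + 2)
    (hDRG : IsDRG3 Γ k r μ) (hAnt : IsAntipodal Γ) :
    ∃ f : V → Fin (k + 1),
      (∀ x y : V, x ≠ y →
        ((SimpleGraph.fromRel
            (fun a b => ((distGraph Γ 2).commonNeighbors a b).ncard = (r - 1) ^ 2 * μ)).Adj x y
          ↔ f x ≠ f y)) ∧
      (∀ i : Fin (k + 1), {x : V | f x = i}.ncard = r) ∧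
      ∀ x y : V, f x = f y ↔ (x = y ∨ Γ.dist x y = 3) := by
  classical
  obtain ⟨s, rfl⟩ : ∃ s, r = s + 3 := ⟨r - 3, by omega⟩
  obtain ⟨hconn, hdiam, -, hcnt⟩ := hDRG
  have hk0 : 0 < k := hk ▸ Nat.succ_pos _
  have dsymm : ∀ x y : V, Γ.dist x y = Γ.dist y x := fun x y => dist_comm
  have dtri : ∀ x y z : V, Γ.dist x z ≤ Γ.dist x y + Γ.dist y z :=
    fun _ _ _ => hconn.dist_triangle
  have dzero : ∀ x y : V, Γ.dist x y = 0 ↔ x = y := fun x y => hconn.dist_eq_zero_iff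
  have dadj : ∀ x y : V, Γ.dist x y = 1 ↔ Γ.Adj x y := fun x y => dist_eq_one_iff_adj
  -- antipodal helper
  have hRne : ∀ x y z : V, Γ.dist x y ≠ 3 → x ≠ y → Γ.dist y z = 3 →
      x ≠ z ∧ Γ.dist x z ≠ 3 := by
    intro x y z h1 h2 h3
    constructor
    · rintro rfl
      exact h1 (by rw [dsymm]; exact h3)
    · intro h4
      rcases hAnt x z y (Or.inr h4) (Or.inr (by rw [dsymm]; exact h3)) with h | h
      · exact h2 h
      · exact h1 h
  -- counting hypotheses as Finset cards
  have hb : ∀ (i : ℕ) (x y : V), i ≤ 3 → Γ.dist x y = i →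
      (Finset.univ.filter (fun z => Γ.dist x z = i + 1 ∧ Γ.Adj z y)).card
        = bArr k (s + 3) μ i := by
    intro i x y h1 h2
    rw [← ncard_eq_card_filter]
    exact (hcnt i x y h1 h2).2
  have hc : ∀ (i : ℕ) (x y : V), i ≤ 3 → Γ.dist x y = i →
      (Finset.univ.filter (fun z => Γ.dist x z = i - 1 ∧ Γ.Adj z y)).card = cArr k μ i := by
    intro i x y h1 h2
    rw [← ncard_eq_card_filter]
    exact (hcnt i x y h1 h2).1
  -- valency / sphere sizes
  have key : ∀ (x : V) (i : ℕ), i ≤ 2 →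
      (Finset.univ.filter (fun z => Γ.dist x z = i)).card * bArr k (s + 3) μ i
        = (Finset.univ.filter (fun z => Γ.dist x z = i + 1)).card * cArr k μ (i + 1) := by
    intro x i hi
    have e1 : ∑ z ∈ Finset.univ.filter (fun z => Γ.dist x z = i),
        ((Finset.univ.filter (fun w => Γ.dist x w = i + 1)).filter (fun w => Γ.Adj z w)).card
        = (Finset.univ.filter (fun z => Γ.dist x z = i)).card * bArr k (s + 3) μ i := by
      apply Finset.sum_const_nat
      intro z hz
      have hz' : Γ.dist x z = i := by simpa using hz
      rw [← hb i x z (by omega) hz']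
      congr 1
      ext w
      simp only [Finset.mem_filter, Finset.mem_univ, true_and]
      exact ⟨fun ⟨h1, h2⟩ => ⟨h1, h2.symm⟩, fun ⟨h1, h2⟩ => ⟨h1, h2.symm⟩⟩
    have e2 : ∑ w ∈ Finset.univ.filter (fun w => Γ.dist x w = i + 1),
        ((Finset.univ.filter (fun z => Γ.dist x z = i)).filter (fun z => Γ.Adj z w)).card
        = (Finset.univ.filter (fun z => Γ.dist x z = i + 1)).card * cArr k μ (i + 1) := by
      apply Finset.sum_const_nat
      intro w hw
      have hw' : Γ.dist x w = i + 1 := by simpa using hw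
      rw [← hc (i + 1) x w (by omega) hw']
      congr 1
      ext z
      simp only [Finset.mem_filter, Finset.mem_univ, true_and, Nat.add_sub_cancel]
    rw [← e1, ← e2]
    exact double_count _ _ Γ.Adj
  have s1 : ∀ x : V, (Finset.univ.filter (fun z => Γ.dist x z = 1)).card = k := by
    intro x
    have h0 := hb 0 x x (by omega) SimpleGraph.dist_self
    simp only [bArr, zero_add] at h0
    rw [← h0]
    congr 1
    ext z
    simp only [Finset.mem_filter, Finset.mem_univ, true_and]
    exact ⟨fun h1 => ⟨h1, ((dadj x z).mp h1).symm⟩, fun ⟨h1, _⟩ => h1⟩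
  have s2 : ∀ x : V, (Finset.univ.filter (fun z => Γ.dist x z = 2)).card = k * (s + 2) := by
    intro x
    have h := key x 1 (by omega)
    rw [s1 x] at h
    simp only [bArr, cArr] at h
    rw [show s + 3 - 1 = s + 2 from rfl, ← mul_assoc] at h
    exact (Nat.eq_of_mul_eq_mul_right hμ h).symm
  have s3 : ∀ x : V, (Finset.univ.filter (fun z => Γ.dist x z = 3)).card = s + 2 := by
    intro x
    have h := key x 2 (by omega)
    rw [s2 x] at h
    simp only [bArr, cArr, mul_one] at h
    rw [mul_comm k (s + 2)] at h
    exact (Nat.eq_of_mul_eq_mul_right hk0 h).symm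
  have s0 : ∀ x : V, (Finset.univ.filter (fun z => Γ.dist x z = 0)).card = 1 := by
    intro x
    rw [Finset.card_eq_one]
    refine ⟨x, ?_⟩
    ext z
    simp only [Finset.mem_filter, Finset.mem_univ, true_and, Finset.mem_singleton]
    rw [dzero]
    exact eq_comm
  -- partition of a sphere by distances to y
  have part4 : ∀ (x y : V) (i : ℕ),
      (Finset.univ.filter (fun z => Γ.dist x z = i)).card
        = (Finset.univ.filter (fun z => Γ.dist x z = i ∧ Γ.dist y z = 0)).card
        + (Finset.univ.filter (fun z => Γ.dist x z = i ∧ Γ.dist y z = 1)).card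
        + (Finset.univ.filter (fun z => Γ.dist x z = i ∧ Γ.dist y z = 2)).card
        + (Finset.univ.filter (fun z => Γ.dist x z = i ∧ Γ.dist y z = 3)).card := by
    intro x y i
    have h := card_partition4 (Finset.univ.filter (fun z => Γ.dist x z = i))
      (fun z => Γ.dist y z) (fun z _ => hdiam y z)
    have hFj : ∀ j : ℕ, ((Finset.univ.filter (fun z => Γ.dist x z = i)).filter
        (fun z => Γ.dist y z = j))
        = Finset.univ.filter (fun z => Γ.dist x z = i ∧ Γ.dist y z = j) := by
      intro j
      ext z
      simp only [Finset.mem_filter, Finset.mem_univ, true_and]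
    rw [hFj 0, hFj 1, hFj 2, hFj 3] at h
    exact h
  -- the three common-2-neighbour counts
  have case1 : ∀ x y : V, Γ.dist x y = 1 →
      (Finset.univ.filter (fun z => Γ.dist x z = 2 ∧ Γ.dist y z = 2)).card = (s + 2) ^ 2 * μ := by
    intro x y hxy
    have hxyne : x ≠ y := by
      intro he; rw [he, SimpleGraph.dist_self] at hxy; omega
    have hp := part4 x y 2
    rw [s2 x] at hp
    have h0 : (Finset.univ.filter (fun z => Γ.dist x z = 2 ∧ Γ.dist y z = 0)).card = 0 := by
      rw [Finset.card_eq_zero]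
      ext z
      simp only [Finset.mem_filter, Finset.mem_univ, true_and, Finset.notMem_empty, iff_false]
      rintro ⟨h1, h2⟩
      rw [dzero] at h2
      subst h2
      omega
    have h1 : (Finset.univ.filter (fun z => Γ.dist x z = 2 ∧ Γ.dist y z = 1)).card
        = (s + 2) * μ := by
      have hb1 := hb 1 x y (by omega) hxy
      simp only [bArr] at hb1
      rw [show s + 3 - 1 = s + 2 from rfl] at hb1
      rw [← hb1]
      congr 1
      ext z
      simp only [Finset.mem_filter, Finset.mem_univ, true_and]
      constructor
      · rintro ⟨u1, u2⟩; exact ⟨u1, ((dadj y z).mp u2).symm⟩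
      · rintro ⟨u1, u2⟩; exact ⟨u1, (dadj y z).mpr u2.symm⟩
    have h3 : (Finset.univ.filter (fun z => Γ.dist x z = 2 ∧ Γ.dist y z = 3)).card = s + 2 := by
      have hset : (Finset.univ.filter (fun z => Γ.dist x z = 2 ∧ Γ.dist y z = 3))
          = Finset.univ.filter (fun z => Γ.dist y z = 3) := by
        ext z
        simp only [Finset.mem_filter, Finset.mem_univ, true_and]
        constructor
        · rintro ⟨-, u2⟩; exact u2
        · intro u2
          refine ⟨?_, u2⟩
          have hub : Γ.dist x z ≤ 3 := hdiam x z
          have hlb : Γ.dist y z ≤ Γ.dist y x + Γ.dist x z := dtri y x z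
          rw [← dsymm x y, hxy] at hlb
          have hne3 := (hRne x y z (by omega) hxyne u2).2
          omega
      rw [hset, s3 y]
    rw [h0, h1, h3] at hp
    subst hk
    linarith [hp]
  have case2 : ∀ x y : V, Γ.dist x y = 2 →
      (Finset.univ.filter (fun z => Γ.dist x z = 2 ∧ Γ.dist y z = 2)).card = (s + 2) ^ 2 * μ := by
    intro x y hxy
    have hxyne : x ≠ y := by
      intro he; rw [he, SimpleGraph.dist_self] at hxy; omega
    have hp := part4 x y 2
    rw [s2 x] at hp
    -- A0 = {y}
    have h0 : (Finset.univ.filter (fun z => Γ.dist x z = 2 ∧ Γ.dist y z = 0)).card = 1 := by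
      rw [Finset.card_eq_one]
      refine ⟨y, ?_⟩
      ext z
      simp only [Finset.mem_filter, Finset.mem_univ, true_and, Finset.mem_singleton]
      constructor
      · rintro ⟨h1, h2⟩; rw [dzero] at h2; exact h2.symm
      · rintro rfl; exact ⟨hxy, SimpleGraph.dist_self⟩
    -- A1 via the partition of the sphere of radius 1 around y
    have hp1 := part4 y x 1
    rw [s1 y] at hp1
    have g0 : (Finset.univ.filter (fun z => Γ.dist y z = 1 ∧ Γ.dist x z = 0)).card = 0 := by
      rw [Finset.card_eq_zero]
      ext z
      simp only [Finset.mem_filter, Finset.mem_univ, true_and, Finset.notMem_empty, iff_false]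
      rintro ⟨h1, h2⟩
      rw [dzero] at h2
      subst h2
      rw [← dsymm] at h1
      omega
    have g1 : (Finset.univ.filter (fun z => Γ.dist y z = 1 ∧ Γ.dist x z = 1)).card = μ := by
      have hc2 := hc 2 x y (by omega) hxy
      simp only [cArr] at hc2
      rw [show (2 : ℕ) - 1 = 1 from rfl] at hc2
      rw [← hc2]
      congr 1
      ext z
      simp only [Finset.mem_filter, Finset.mem_univ, true_and]
      constructor
      · rintro ⟨u1, u2⟩; exact ⟨u2, ((dadj y z).mp u1).symm⟩
      · rintro ⟨u1, u2⟩; exact ⟨(dadj y z).mpr u2.symm, u1⟩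
    have g3 : (Finset.univ.filter (fun z => Γ.dist y z = 1 ∧ Γ.dist x z = 3)).card = 1 := by
      have hb2 := hb 2 x y (by omega) hxy
      simp only [bArr] at hb2
      refine Eq.trans ?_ hb2
      congr 1
      ext z
      simp only [Finset.mem_filter, Finset.mem_univ, true_and]
      constructor
      · rintro ⟨u1, u2⟩; exact ⟨u2, ((dadj y z).mp u1).symm⟩
      · rintro ⟨u1, u2⟩; exact ⟨(dadj y z).mpr u2.symm, u1⟩
    -- A1 equals the fiber over 2 in that partition
    have hA1 : (Finset.univ.filter (fun z => Γ.dist x z = 2 ∧ Γ.dist y z = 1)).card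
        = (Finset.univ.filter (fun z => Γ.dist y z = 1 ∧ Γ.dist x z = 2)).card := by
      congr 1
      ext z
      simp only [Finset.mem_filter, Finset.mem_univ, true_and]
      tauto
    -- A3 via the partition of the sphere of radius 3 around y
    have hp3 := part4 y x 3
    rw [s3 y] at hp3
    have t0 : (Finset.univ.filter (fun z => Γ.dist y z = 3 ∧ Γ.dist x z = 0)).card = 0 := by
      rw [Finset.card_eq_zero]
      ext z
      simp only [Finset.mem_filter, Finset.mem_univ, true_and, Finset.notMem_empty, iff_false]
      rintro ⟨h1, h2⟩
      rw [dzero] at h2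
      subst h2
      rw [← dsymm] at h1
      omega
    have t1 : (Finset.univ.filter (fun z => Γ.dist y z = 3 ∧ Γ.dist x z = 1)).card = 1 := by
      have hb2 := hb 2 y x (by omega) (by rw [← dsymm]; exact hxy)
      simp only [bArr] at hb2
      refine Eq.trans ?_ hb2
      congr 1
      ext z
      simp only [Finset.mem_filter, Finset.mem_univ, true_and]
      constructor
      · rintro ⟨u1, u2⟩; exact ⟨u1, ((dadj x z).mp u2).symm⟩
      · rintro ⟨u1, u2⟩; exact ⟨u1, (dadj x z).mpr u2.symm⟩
    have t3 : (Finset.univ.filter (fun z => Γ.dist y z = 3 ∧ Γ.dist x z = 3)).card = 0 := by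
      rw [Finset.card_eq_zero]
      ext z
      simp only [Finset.mem_filter, Finset.mem_univ, true_and, Finset.notMem_empty, iff_false]
      rintro ⟨h1, h2⟩
      exact (hRne x y z (by omega) hxyne h1).2 h2
    have hA3 : (Finset.univ.filter (fun z => Γ.dist x z = 2 ∧ Γ.dist y z = 3)).card
        = (Finset.univ.filter (fun z => Γ.dist y z = 3 ∧ Γ.dist x z = 2)).card := by
      congr 1
      ext z
      simp only [Finset.mem_filter, Finset.mem_univ, true_and]
      tauto
    rw [g0, g1, g3] at hp1
    rw [t0, t1, t3] at hp3
    rw [h0, hA1, hA3] at hp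
    subst hk
    linarith [hp, hp1, hp3]
  have case3 : ∀ x y : V, Γ.dist x y = 3 →
      (Finset.univ.filter (fun z => Γ.dist x z = 2 ∧ Γ.dist y z = 2)).card = k * (s + 1) := by
    intro x y hxy
    have hp := part4 x y 2
    rw [s2 x] at hp
    have h0 : (Finset.univ.filter (fun z => Γ.dist x z = 2 ∧ Γ.dist y z = 0)).card = 0 := by
      rw [Finset.card_eq_zero]
      ext z
      simp only [Finset.mem_filter, Finset.mem_univ, true_and, Finset.notMem_empty, iff_false]
      rintro ⟨h1, h2⟩
      rw [dzero] at h2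
      subst h2
      omega
    have h1 : (Finset.univ.filter (fun z => Γ.dist x z = 2 ∧ Γ.dist y z = 1)).card = k := by
      have hc3 := hc 3 x y (by omega) hxy
      simp only [cArr] at hc3
      rw [show (3 : ℕ) - 1 = 2 from rfl] at hc3
      rw [← hc3]
      congr 1
      ext z
      simp only [Finset.mem_filter, Finset.mem_univ, true_and]
      constructor
      · rintro ⟨u1, u2⟩; exact ⟨u1, ((dadj y z).mp u2).symm⟩
      · rintro ⟨u1, u2⟩; exact ⟨u1, (dadj y z).mpr u2.symm⟩
    have h3 : (Finset.univ.filter (fun z => Γ.dist x z = 2 ∧ Γ.dist y z = 3)).card = 0 := by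
      rw [Finset.card_eq_zero]
      ext z
      simp only [Finset.mem_filter, Finset.mem_univ, true_and, Finset.notMem_empty, iff_false]
      rintro ⟨h1, h2⟩
      rcases hAnt x y z (Or.inr hxy) (Or.inr h2) with h | h
      · subst h; simp [SimpleGraph.dist_self] at h1
      · omega
    rw [h0, h1, h3] at hp
    linarith [hp]
  -- the quotient by antipodal classes
  let st : Setoid V := ⟨fun a b => a = b ∨ Γ.dist a b = 3,
    ⟨fun a => Or.inl rfl,
     fun {a b} h => by
       rcases h with h | h
       · exact Or.inl h.symm
       · exact Or.inr (by rw [SimpleGraph.dist_comm]; exact h),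
     fun {a b c} h1 h2 => hAnt a b c h1 h2⟩⟩
  haveI : Fintype (Quotient st) := Fintype.ofFinite _
  have fib : ∀ v0 : V,
      (Finset.univ.filter (fun v => Quotient.mk st v = Quotient.mk st v0)).card = s + 3 := by
    intro v0
    have hset : Finset.univ.filter (fun v => Quotient.mk st v = Quotient.mk st v0)
        = insert v0 (Finset.univ.filter (fun z => Γ.dist v0 z = 3)) := by
      ext z
      simp only [Finset.mem_filter, Finset.mem_univ, true_and, Finset.mem_insert]
      rw [Quotient.eq]
      constructor
      · rintro (h | h)
        · exact Or.inl h
        · exact Or.inr (by rw [SimpleGraph.dist_comm]; exact h)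
      · rintro (h | h)
        · exact Or.inl h
        · exact Or.inr (by rw [SimpleGraph.dist_comm]; exact h)
    rw [hset, Finset.card_insert_of_notMem (by simp [SimpleGraph.dist_self]), s3 v0]
  have cardV : Fintype.card V = (k + 1) * (s + 3) := by
    obtain ⟨x0⟩ := hconn.nonempty
    have h := card_partition4 (Finset.univ : Finset V) (fun z => Γ.dist x0 z)
      (fun z _ => hdiam x0 z)
    rw [Finset.card_univ] at h
    rw [h, s0 x0, s1 x0, s2 x0, s3 x0, hk]
    ring
  have cardQ : Fintype.card (Quotient st) = k + 1 := by
    have h1 : Fintype.card V = Fintype.card (Quotient st) * (s + 3) := by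
      rw [← Finset.card_univ (α := V),
        Finset.card_eq_sum_card_fiberwise (f := fun v => Quotient.mk st v)
          (t := Finset.univ) (fun v _ => Finset.mem_univ _)]
      rw [Finset.sum_congr rfl (fun q _ => ?_), Finset.sum_const, Finset.card_univ,
        smul_eq_mul]
      obtain ⟨v0, rfl⟩ := Quotient.exists_rep q
      exact fib v0
    rw [h1] at cardV
    exact Nat.eq_of_mul_eq_mul_right (by omega) cardV
  let e : Quotient st ≃ Fin (k + 1) := Fintype.equivFinOfCardEq cardQ
  have hf3 : ∀ x y : V, e (Quotient.mk st x) = e (Quotient.mk st y)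
      ↔ (x = y ∨ Γ.dist x y = 3) := by
    intro x y
    rw [Equiv.apply_eq_iff_eq, Quotient.eq]
    exact Iff.rfl
  -- adjacency in the distance-2 graph
  have hG2 : ∀ a b : V, (distGraph Γ 2).Adj a b ↔ Γ.dist a b = 2 := by
    intro a b
    show (SimpleGraph.fromRel _).Adj a b ↔ _
    rw [SimpleGraph.fromRel_adj]
    constructor
    · rintro ⟨hne', h | h⟩
      · exact h
      · rw [dsymm]; exact h
    · intro h
      refine ⟨?_, Or.inl h⟩
      intro he
      rw [he, SimpleGraph.dist_self] at h
      omega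
  have hcn : ∀ a b : V, ((distGraph Γ 2).commonNeighbors a b).ncard
      = (Finset.univ.filter (fun z => Γ.dist a z = 2 ∧ Γ.dist b z = 2)).card := by
    intro a b
    have hseteq : (distGraph Γ 2).commonNeighbors a b
        = {z : V | Γ.dist a z = 2 ∧ Γ.dist b z = 2} := by
      ext z
      rw [SimpleGraph.mem_commonNeighbors]
      simp only [Set.mem_setOf_eq, hG2]
    rw [hseteq, ncard_eq_card_filter]
  refine ⟨fun v => e (Quotient.mk st v), ?_, ?_, ?_⟩
  · -- adjacency in Ω iff different classes
    intro x y hxy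
    rw [SimpleGraph.fromRel_adj]
    have hNsymm : (Finset.univ.filter (fun z => Γ.dist y z = 2 ∧ Γ.dist x z = 2)).card
        = (Finset.univ.filter (fun z => Γ.dist x z = 2 ∧ Γ.dist y z = 2)).card := by
      congr 1
      ext z
      simp only [Finset.mem_filter, Finset.mem_univ, true_and]
      tauto
    have hcval : (s + 3 - 1) ^ 2 * μ = (s + 2) ^ 2 * μ := rfl
    have hd1 : 0 < Γ.dist x y := hconn.pos_dist_of_ne hxy
    have hd3 : Γ.dist x y ≤ 3 := hdiam x y
    have hmain : (((distGraph Γ 2).commonNeighbors x y).ncard = (s + 3 - 1) ^ 2 * μ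
        ∨ ((distGraph Γ 2).commonNeighbors y x).ncard = (s + 3 - 1) ^ 2 * μ)
        ↔ Γ.dist x y ≠ 3 := by
      rw [hcn, hcn, hNsymm, hcval, or_self]
      constructor
      · intro h h3
        rw [case3 x y h3] at h
        have : μ = s + 1 := by nlinarith [h, hk]
        omega
      · intro h
        have h12 : Γ.dist x y = 1 ∨ Γ.dist x y = 2 := by omega
        rcases h12 with h12 | h12
        · exact case1 x y h12
        · exact case2 x y h12
    constructor
    · rintro ⟨-, h⟩
      intro hfeq
      rcases (hf3 x y).mp hfeq with he | h3
      · exact hxy he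
      · exact (hmain.mp h) h3
    · intro hfne
      exact ⟨hxy, hmain.mpr (fun h3 => hfne ((hf3 x y).mpr (Or.inr h3)))⟩
  · -- each class has size r
    intro i
    have hset : {x : V | e (Quotient.mk st x) = i}
        = {x : V | Quotient.mk st x = e.symm i} := by
      ext z
      simp only [Set.mem_setOf_eq]
      rw [← Equiv.apply_eq_iff_eq_symm_apply]
    rw [hset, ncard_eq_card_filter]
    obtain ⟨v0, hv0⟩ := Quotient.exists_rep (e.symm i)
    rw [← hv0]
    exact fib v0
  · -- classes are antipodal classes
    exact hf3
end

section
/- Let Γ be an antipodal distance-regular graph of diameter 3 with intersection array {k, (r−1)μ, 1; 1, μ, k}, r > 2, k = rμ + 1. Then Γ₂ is a divisible design graph whose canonical partition is the antipodal partition of Γ: two distinct vertices in the same antipodal class have k(r−2) common neighbors in Γ₂, while two vertices in different antipodal classes have (r−1)²μ common neighbors in Γ₂. -/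
open SimpleGraph

variable {V : Type*}

lemma ncard_partition4 [Fintype V] (Γ : SimpleGraph V)
    (hd : ∀ a b : V, Γ.dist a b ≤ 3) (s : Set V) (y : V) :
    s.ncard = {z | z ∈ s ∧ Γ.dist y z = 0}.ncard + {z | z ∈ s ∧ Γ.dist y z = 1}.ncard
      + {z | z ∈ s ∧ Γ.dist y z = 2}.ncard + {z | z ∈ s ∧ Γ.dist y z = 3}.ncard := by
  have dis : ∀ i j : ℕ, i ≠ j →
      Disjoint {z | z ∈ s ∧ Γ.dist y z = i} {z | z ∈ s ∧ Γ.dist y z = j} := by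
    intro i j hij
    rw [Set.disjoint_left]
    rintro z ⟨_, h1⟩ ⟨_, h2⟩
    omega
  have hu : s = ({z | z ∈ s ∧ Γ.dist y z = 0} ∪ {z | z ∈ s ∧ Γ.dist y z = 1})
      ∪ ({z | z ∈ s ∧ Γ.dist y z = 2} ∪ {z | z ∈ s ∧ Γ.dist y z = 3}) := by
    ext z
    simp only [Set.mem_union, Set.mem_setOf_eq]
    constructor
    · intro hz
      have h := hd y z
      have : Γ.dist y z = 0 ∨ Γ.dist y z = 1 ∨ Γ.dist y z = 2 ∨ Γ.dist y z = 3 := by omega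
      tauto
    · tauto
  conv_lhs => rw [hu]
  rw [Set.ncard_union_eq, Set.ncard_union_eq (dis 0 1 (by norm_num)),
    Set.ncard_union_eq (dis 2 3 (by norm_num))]
  · ring
  · rw [Set.disjoint_union_left]
    constructor <;> rw [Set.disjoint_union_right] <;>
      exact ⟨dis _ _ (by norm_num), dis _ _ (by norm_num)⟩

lemma double_count_s10 [Fintype V] (Γ : SimpleGraph V) (x : V) (i c b : ℕ)
    (hc : ∀ z : V, Γ.dist x z = i + 1 → {w : V | Γ.dist x w = i ∧ Γ.Adj w z}.ncard = c)
    (hb : ∀ y : V, Γ.dist x y = i → {z : V | Γ.dist x z = i + 1 ∧ Γ.Adj z y}.ncard = b) :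
    {z : V | Γ.dist x z = i + 1}.ncard * c = {y : V | Γ.dist x y = i}.ncard * b := by
  classical
  set A := Finset.univ.filter (fun y : V => Γ.dist x y = i) with hA
  set B := Finset.univ.filter (fun z : V => Γ.dist x z = i + 1) with hB
  have hAcard : {y : V | Γ.dist x y = i}.ncard = A.card := by
    rw [Set.ncard_eq_toFinset_card', Set.toFinset_setOf]
  have hBcard : {z : V | Γ.dist x z = i + 1}.ncard = B.card := by
    rw [Set.ncard_eq_toFinset_card', Set.toFinset_setOf]
  have hzc : ∀ z ∈ B, (A.filter (fun w => Γ.Adj w z)).card = c := by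
    intro z hz
    rw [hB, Finset.mem_filter] at hz
    have h := hc z hz.2
    rw [Set.ncard_eq_toFinset_card', Set.toFinset_setOf] at h
    rw [← h, hA, Finset.filter_filter]
  have hwb : ∀ w ∈ A, (B.filter (fun z => Γ.Adj w z)).card = b := by
    intro w hw
    rw [hA, Finset.mem_filter] at hw
    have h := hb w hw.2
    rw [Set.ncard_eq_toFinset_card', Set.toFinset_setOf] at h
    rw [← h, hB, Finset.filter_filter]
    congr 1
    ext z
    simp only [Finset.mem_filter]
    constructor <;> rintro ⟨hu, h1, h2⟩ <;> exact ⟨hu, h1, h2.symm⟩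
  have swap : ∑ z ∈ B, (A.filter (fun w => Γ.Adj w z)).card
      = ∑ w ∈ A, (B.filter (fun z => Γ.Adj w z)).card := by
    simp only [Finset.card_filter]
    exact Finset.sum_comm
  rw [hAcard, hBcard]
  calc B.card * c = ∑ _z ∈ B, c := by rw [Finset.sum_const, smul_eq_mul]
    _ = ∑ z ∈ B, (A.filter (fun w => Γ.Adj w z)).card := (Finset.sum_congr rfl hzc).symm
    _ = ∑ w ∈ A, (B.filter (fun z => Γ.Adj w z)).card := swap
    _ = ∑ _w ∈ A, b := Finset.sum_congr rfl hwb
    _ = A.card * b := by rw [Finset.sum_const, smul_eq_mul]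

/-- Γ₂ is a divisible design graph with canonical partition the antipodal
partition: same antipodal class (distance 3) gives k(r−2) common neighbours in Γ₂,
different classes give (r−1)²μ. -/
theorem stmt10 [Fintype V] (Γ : SimpleGraph V) (k r μ : ℕ)
    (hr : 2 < r) (hμ : 0 < μ) (hk : k = r * μ + 1)
    (hDRG : IsDRG3 Γ k r μ) (hAnt : IsAntipodal Γ) :
    (∀ x : V, ((distGraph Γ 2).neighborSet x).ncard = (r - 1) * k) ∧
    ∀ x y : V, x ≠ y →
      (Γ.dist x y = 3 → ((distGraph Γ 2).commonNeighbors x y).ncard = k * (r - 2)) ∧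
      (Γ.dist x y ≠ 3 → ((distGraph Γ 2).commonNeighbors x y).ncard = (r - 1) ^ 2 * μ) := by
  obtain ⟨hconn, hdle, -, hint⟩ := hDRG
  have hd0 : ∀ a b : V, Γ.dist a b = 0 ↔ a = b := fun a b => hconn.dist_eq_zero_iff
  have hd1 : ∀ a b : V, Γ.dist a b = 1 ↔ Γ.Adj a b := fun a b => Γ.dist_eq_one_iff_adj
  have tri : ∀ a b c : V, Γ.dist a c ≤ Γ.dist a b + Γ.dist b c := fun a b c => hconn.dist_triangle
  have hS1 : ∀ v : V, {z : V | Γ.dist v z = 1}.ncard = k := by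
    intro v
    have h := (hint 0 v v (by norm_num) ((hd0 v v).2 rfl)).2
    have e : {z : V | Γ.dist v z = 0 + 1 ∧ Γ.Adj z v} = {z : V | Γ.dist v z = 1} := by
      ext z
      simp only [Set.mem_setOf_eq, zero_add]
      exact ⟨fun h => h.1, fun h => ⟨h, ((hd1 v z).1 h).symm⟩⟩
    rw [e] at h
    simpa [bArr] using h
  have hS2 : ∀ v : V, {z : V | Γ.dist v z = 2}.ncard = k * (r - 1) := by
    intro v
    have hc : ∀ z : V, Γ.dist v z = 1 + 1 → {w : V | Γ.dist v w = 1 ∧ Γ.Adj w z}.ncard = μ := by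
      intro z hz
      have h := (hint 2 v z (by norm_num) (by omega)).1
      simp only [cArr, show (2:ℕ) - 1 = 1 by norm_num] at h
      exact h
    have hb : ∀ y : V, Γ.dist v y = 1 →
        {z : V | Γ.dist v z = 1 + 1 ∧ Γ.Adj z y}.ncard = (r - 1) * μ := by
      intro y hy
      have h := (hint 1 v y (by norm_num) hy).2
      simpa [bArr] using h
    have h := double_count_s10 Γ v 1 μ ((r - 1) * μ) hc hb
    rw [hS1 v] at h
    have e : {z : V | Γ.dist v z = 1 + 1} = {z : V | Γ.dist v z = 2} := by norm_num
    rw [e] at h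
    have h2 : {z : V | Γ.dist v z = 2}.ncard * μ = (k * (r - 1)) * μ := by rw [h]; ring
    exact Nat.eq_of_mul_eq_mul_right hμ h2
  have hS3 : ∀ v : V, {z : V | Γ.dist v z = 3}.ncard = r - 1 := by
    intro v
    have hc : ∀ z : V, Γ.dist v z = 2 + 1 → {w : V | Γ.dist v w = 2 ∧ Γ.Adj w z}.ncard = k := by
      intro z hz
      have h := (hint 3 v z (by norm_num) (by omega)).1
      simp only [cArr, show (3:ℕ) - 1 = 2 by norm_num] at h
      exact h
    have hb : ∀ y : V, Γ.dist v y = 2 →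
        {z : V | Γ.dist v z = 2 + 1 ∧ Γ.Adj z y}.ncard = 1 := by
      intro y hy
      have h := (hint 2 v y (by norm_num) hy).2
      simpa [bArr] using h
    have h := double_count_s10 Γ v 2 k 1 hc hb
    rw [hS2 v] at h
    have e : {z : V | Γ.dist v z = 2 + 1} = {z : V | Γ.dist v z = 3} := by norm_num
    rw [e] at h
    have h2 : {z : V | Γ.dist v z = 3}.ncard * k = (r - 1) * k := by rw [h]; ring
    exact Nat.eq_of_mul_eq_mul_right (by omega) h2
  have adj2 : ∀ a b : V, (distGraph Γ 2).Adj a b ↔ Γ.dist a b = 2 := by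
    intro a b
    simp only [distGraph, SimpleGraph.fromRel_adj]
    constructor
    · rintro ⟨hne, h | h⟩
      · exact h
      · rwa [SimpleGraph.dist_comm]
    · intro h
      refine ⟨fun he => ?_, Or.inl h⟩
      subst he
      rw [SimpleGraph.dist_self] at h
      omega
  have hCN : ∀ a b : V, (distGraph Γ 2).commonNeighbors a b
      = {z : V | Γ.dist a z = 2 ∧ Γ.dist b z = 2} := by
    intro a b
    ext z
    simp only [SimpleGraph.mem_commonNeighbors, Set.mem_setOf_eq, adj2]
  have hNS : ∀ a : V, (distGraph Γ 2).neighborSet a = {z : V | Γ.dist a z = 2} := by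
    intro a
    ext z
    rw [SimpleGraph.mem_neighborSet, adj2]
    exact Iff.rfl
  subst hk
  obtain ⟨s, rfl⟩ : ∃ s, r = s + 3 := ⟨r - 3, by omega⟩
  constructor
  · intro x
    rw [hNS x, hS2 x, Nat.mul_comm]
  · intro x y hxy
    have hxy0 : Γ.dist x y ≠ 0 := fun h => hxy ((hd0 x y).1 h)
    have hpart := ncard_partition4 Γ hdle {z : V | Γ.dist x z = 2} y
    rw [hS2 x] at hpart
    have hd3 : Γ.dist x y = 1 ∨ Γ.dist x y = 2 ∨ Γ.dist x y = 3 := by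
      have := hdle x y; omega
    rcases hd3 with h | h | h
    · -- distance 1
      refine ⟨fun hc => absurd hc (by omega), fun _ => ?_⟩
      rw [hCN]
      have e0 : {z | z ∈ {z : V | Γ.dist x z = 2} ∧ Γ.dist y z = 0} = ∅ := by
        rw [Set.eq_empty_iff_forall_notMem]
        rintro z ⟨hz2, hz0⟩
        rw [hd0] at hz0
        subst hz0
        simp only [Set.mem_setOf_eq] at hz2
        omega
      have hbs := (hint 1 x y (by norm_num) h).2
      simp only [bArr] at hbs
      have e1 : {z | z ∈ {z : V | Γ.dist x z = 2} ∧ Γ.dist y z = 1}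
          = {z : V | Γ.dist x z = 1 + 1 ∧ Γ.Adj z y} := by
        ext z
        simp only [Set.mem_setOf_eq]
        constructor
        · rintro ⟨hz2, hz1⟩
          exact ⟨by omega, ((hd1 y z).1 hz1).symm⟩
        · rintro ⟨hz2, hadj⟩
          exact ⟨by omega, (hd1 y z).2 hadj.symm⟩
      have e3 : {z | z ∈ {z : V | Γ.dist x z = 2} ∧ Γ.dist y z = 3}
          = {z : V | Γ.dist y z = 3} := by
        ext z
        simp only [Set.mem_setOf_eq]
        constructor
        · exact fun hz => hz.2
        · intro hz3
          refine ⟨?_, hz3⟩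
          have hzx : z ≠ x := by
            intro he
            subst he
            rw [SimpleGraph.dist_comm] at hz3
            omega
          have hne3 : Γ.dist x z ≠ 3 := by
            intro hc
            rcases hAnt x z y (Or.inr hc) (Or.inr (by rwa [SimpleGraph.dist_comm])) with
              h' | h'
            · exact hxy h'
            · omega
          have hne1 : Γ.dist x z ≠ 1 := by
            intro hc
            have ht := tri y x z
            have hc2 : Γ.dist y x = 1 := by rwa [SimpleGraph.dist_comm]
            omega
          have hne0 : Γ.dist x z ≠ 0 := fun hc => hzx ((hd0 x z).1 hc).symm
          have := hdle x z
          omega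
      rw [e0, Set.ncard_empty, e1, hbs, e3, hS3 y] at hpart
      show {z | z ∈ {z : V | Γ.dist x z = 2} ∧ Γ.dist y z = 2}.ncard = (s + 3 - 1) ^ 2 * μ
      rw [show s + 3 - 1 = s + 2 by omega] at hpart ⊢
      have hid : ((s + 3) * μ + 1) * (s + 2) = (s + 2) ^ 2 * μ + (s + 2) * μ + (s + 2) := by
        ring
      omega
    · -- distance 2
      refine ⟨fun hc => absurd hc (by omega), fun _ => ?_⟩
      rw [hCN]
      have e0 : {z | z ∈ {z : V | Γ.dist x z = 2} ∧ Γ.dist y z = 0} = {y} := by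
        ext z
        simp only [Set.mem_setOf_eq, Set.mem_singleton_iff]
        constructor
        · rintro ⟨hz2, hz0⟩
          exact ((hd0 y z).1 hz0).symm
        · intro hz
          subst hz
          exact ⟨h, (hd0 _ _).2 rfl⟩
      -- partition of sphere 1 around y by distance to x
      have hpart1 := ncard_partition4 Γ hdle {z : V | Γ.dist y z = 1} x
      rw [hS1 y] at hpart1
      have d0 : {z | z ∈ {z : V | Γ.dist y z = 1} ∧ Γ.dist x z = 0} = ∅ := by
        rw [Set.eq_empty_iff_forall_notMem]
        rintro z ⟨hz1, hz0⟩
        rw [hd0] at hz0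
        subst hz0
        simp only [Set.mem_setOf_eq] at hz1
        rw [SimpleGraph.dist_comm] at hz1
        omega
      have hcs := (hint 2 x y (by norm_num) h).1
      simp only [cArr, show (2:ℕ) - 1 = 1 by norm_num] at hcs
      have d1 : {z | z ∈ {z : V | Γ.dist y z = 1} ∧ Γ.dist x z = 1}
          = {z : V | Γ.dist x z = 1 ∧ Γ.Adj z y} := by
        ext z
        simp only [Set.mem_setOf_eq]
        constructor
        · rintro ⟨hz1, hzx⟩
          exact ⟨hzx, ((hd1 y z).1 hz1).symm⟩
        · rintro ⟨hzx, hadj⟩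
          exact ⟨(hd1 y z).2 hadj.symm, hzx⟩
      have hbs := (hint 2 x y (by norm_num) h).2
      simp only [bArr, show (2:ℕ) + 1 = 3 by norm_num] at hbs
      have d3 : {z | z ∈ {z : V | Γ.dist y z = 1} ∧ Γ.dist x z = 3}
          = {z : V | Γ.dist x z = 3 ∧ Γ.Adj z y} := by
        ext z
        simp only [Set.mem_setOf_eq]
        constructor
        · rintro ⟨hz1, hzx⟩
          exact ⟨hzx, ((hd1 y z).1 hz1).symm⟩
        · rintro ⟨hzx, hadj⟩
          exact ⟨(hd1 y z).2 hadj.symm, hzx⟩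
      rw [d0, Set.ncard_empty, d1, hcs, d3, hbs] at hpart1
      -- partition of sphere 3 around y by distance to x
      have hpart3 := ncard_partition4 Γ hdle {z : V | Γ.dist y z = 3} x
      rw [hS3 y] at hpart3
      have f0 : {z | z ∈ {z : V | Γ.dist y z = 3} ∧ Γ.dist x z = 0} = ∅ := by
        rw [Set.eq_empty_iff_forall_notMem]
        rintro z ⟨hz3, hz0⟩
        rw [hd0] at hz0
        subst hz0
        simp only [Set.mem_setOf_eq] at hz3
        rw [SimpleGraph.dist_comm] at hz3
        omega
      have hbs2 := (hint 2 y x (by norm_num) (by rwa [SimpleGraph.dist_comm])).2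
      simp only [bArr, show (2:ℕ) + 1 = 3 by norm_num] at hbs2
      have f1 : {z | z ∈ {z : V | Γ.dist y z = 3} ∧ Γ.dist x z = 1}
          = {z : V | Γ.dist y z = 3 ∧ Γ.Adj z x} := by
        ext z
        simp only [Set.mem_setOf_eq]
        constructor
        · rintro ⟨hz3, hzx⟩
          exact ⟨hz3, ((hd1 x z).1 hzx).symm⟩
        · rintro ⟨hz3, hadj⟩
          exact ⟨hz3, (hd1 x z).2 hadj.symm⟩
      have f3 : {z | z ∈ {z : V | Γ.dist y z = 3} ∧ Γ.dist x z = 3} = ∅ := by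
        rw [Set.eq_empty_iff_forall_notMem]
        rintro z ⟨hz3, hzx3⟩
        simp only [Set.mem_setOf_eq] at hz3
        rcases hAnt x z y (Or.inr hzx3) (Or.inr (by rwa [SimpleGraph.dist_comm])) with
          h' | h'
        · exact hxy h'
        · omega
      rw [f0, Set.ncard_empty, f1, hbs2, f3, Set.ncard_empty] at hpart3
      -- reorder the conjunctions in hpart
      have c1e : {z | z ∈ {z : V | Γ.dist x z = 2} ∧ Γ.dist y z = 1}
          = {z | z ∈ {z : V | Γ.dist y z = 1} ∧ Γ.dist x z = 2} := by
        ext z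
        simp only [Set.mem_setOf_eq]
        tauto
      have c3e : {z | z ∈ {z : V | Γ.dist x z = 2} ∧ Γ.dist y z = 3}
          = {z | z ∈ {z : V | Γ.dist y z = 3} ∧ Γ.dist x z = 2} := by
        ext z
        simp only [Set.mem_setOf_eq]
        tauto
      rw [e0, Set.ncard_singleton, c1e, c3e] at hpart
      show {z | z ∈ {z : V | Γ.dist x z = 2} ∧ Γ.dist y z = 2}.ncard = (s + 3 - 1) ^ 2 * μ
      rw [show s + 3 - 1 = s + 2 by omega] at hpart hpart3 ⊢
      have hid : ((s + 3) * μ + 1) * (s + 2) = (s + 2) ^ 2 * μ + (s + 2) * μ + (s + 2) := by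
        ring
      have hid2 : (s + 3) * μ = (s + 2) * μ + μ := by ring
      omega
    · -- distance 3
      refine ⟨fun _ => ?_, fun hne => absurd h hne⟩
      rw [hCN]
      have e0 : {z | z ∈ {z : V | Γ.dist x z = 2} ∧ Γ.dist y z = 0} = ∅ := by
        rw [Set.eq_empty_iff_forall_notMem]
        rintro z ⟨hz2, hz0⟩
        rw [hd0] at hz0
        subst hz0
        simp only [Set.mem_setOf_eq] at hz2
        omega
      have e1 : {z | z ∈ {z : V | Γ.dist x z = 2} ∧ Γ.dist y z = 1}
          = {z : V | Γ.dist y z = 1} := by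
        ext z
        simp only [Set.mem_setOf_eq]
        constructor
        · exact fun hz => hz.2
        · intro hz1
          refine ⟨?_, hz1⟩
          have hne3 : Γ.dist x z ≠ 3 := by
            intro hc
            rcases hAnt y x z (Or.inr (by rwa [SimpleGraph.dist_comm])) (Or.inr hc) with
              h' | h'
            · subst h'
              have h00 : Γ.dist y y = 0 := (hd0 y y).2 rfl
              omega
            · omega
          have ht := tri x z y
          have hc2 : Γ.dist z y = 1 := by rwa [SimpleGraph.dist_comm]
          have := hdle x z
          omega
      have e3 : {z | z ∈ {z : V | Γ.dist x z = 2} ∧ Γ.dist y z = 3} = ∅ := by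
        rw [Set.eq_empty_iff_forall_notMem]
        rintro z ⟨hz2, hz3⟩
        simp only [Set.mem_setOf_eq] at hz2
        rcases hAnt x y z (Or.inr h) (Or.inr hz3) with h' | h'
        · subst h'
          have h00 : Γ.dist x x = 0 := (hd0 x x).2 rfl
          omega
        · omega
      rw [e0, Set.ncard_empty, e1, hS1 y, e3, Set.ncard_empty] at hpart
      show {z | z ∈ {z : V | Γ.dist x z = 2} ∧ Γ.dist y z = 2}.ncard
        = ((s + 3) * μ + 1) * (s + 3 - 2)
      rw [show s + 3 - 1 = s + 2 by omega] at hpart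
      rw [show s + 3 - 2 = s + 1 by omega]
      have hid : ((s + 3) * μ + 1) * (s + 2)
          = ((s + 3) * μ + 1) * (s + 1) + ((s + 3) * μ + 1) := by ring
      omega
end
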